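/- arXiv:1512.04514 — 6 statements merged into one kernel-verified Lean document; each statement's English description precedes it below -/
import Mathlib

section
/- For a Class B channel with memory M on finite alphabets, the supremum of directed information I(A^n → B^n) over all feedback input kernels P_i(a_i|a^{i-1},b^{i-1}) equals the supremum over the restricted class of kernels of the form π_i^M(a_i | b_{i-M}^{i-1}), and for such restricted inputs the directed information equals ∑_{i=0}^n I(A_i; B_i | B_{i-M}^{i-1}). -/
open Finset

/-- Time indices `j ≤ i`. -/
def idxLe (n : ℕ) (i : Fin (n+1)) : Finset (Fin (n+1)) :=
  Finset.univ.filter fun j => (j : ℕ) ≤ (i : ℕ)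

/-- Time indices `j < i`. -/
def idxLt (n : ℕ) (i : Fin (n+1)) : Finset (Fin (n+1)) :=
  Finset.univ.filter fun j => (j : ℕ) < (i : ℕ)

/-- Time indices `i - M ≤ j < i` (the window of the last `M` outputs). -/
def idxWin (n : ℕ) (i : Fin (n+1)) (M : ℕ) : Finset (Fin (n+1)) :=
  Finset.univ.filter fun j => (j : ℕ) < (i : ℕ) ∧ (i : ℕ) ≤ (j : ℕ) + M

variable {n : ℕ} {A B : Type} [Fintype A] [Fintype B] [DecidableEq A] [DecidableEq B]

/-- Marginal of the joint pmf `μ` on the `A`-coordinates in `SA` and the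
`B`-coordinates in `SB`, evaluated at `(a, b)`. -/
noncomputable def marg (μ : (Fin (n+1) → A) → (Fin (n+1) → B) → ℝ)
    (SA SB : Finset (Fin (n+1))) (a : Fin (n+1) → A) (b : Fin (n+1) → B) : ℝ :=
  ∑ a' : Fin (n+1) → A, ∑ b' : Fin (n+1) → B,
    if (∀ j ∈ SA, a' j = a j) ∧ (∀ j ∈ SB, b' j = b j) then μ a' b' else 0

/-- Marginal of `μ` on `B`-coordinates in `SB`. -/
noncomputable def margB (μ : (Fin (n+1) → A) → (Fin (n+1) → B) → ℝ)
    (SB : Finset (Fin (n+1))) (b : Fin (n+1) → B) : ℝ :=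
  ∑ a' : Fin (n+1) → A, ∑ b' : Fin (n+1) → B,
    if ∀ j ∈ SB, b' j = b j then μ a' b' else 0

/-- The induced conditional output pmf `Π_i(b_i | b^{i-1})`. -/
noncomputable def outCond (μ : (Fin (n+1) → A) → (Fin (n+1) → B) → ℝ)
    (i : Fin (n+1)) (b : Fin (n+1) → B) : ℝ :=
  margB μ (idxLe n i) b / margB μ (idxLt n i) b

/-- Conditional mutual information `I(A_{TA}; B_i | B_{SB})` under `μ`
(terms with zero joint probability vanish). -/
noncomputable def cmi (μ : (Fin (n+1) → A) → (Fin (n+1) → B) → ℝ)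
    (TA : Finset (Fin (n+1))) (i : Fin (n+1)) (SB : Finset (Fin (n+1))) : ℝ :=
  ∑ a : Fin (n+1) → A, ∑ b : Fin (n+1) → B,
    μ a b * Real.log (marg μ TA (insert i SB) a b * marg μ ∅ SB a b /
      (marg μ TA SB a b * marg μ ∅ (insert i SB) a b))

/-- Directed information `I(A^n → B^n) = ∑_i I(A^i; B_i | B^{i-1})`. -/
noncomputable def DI (μ : (Fin (n+1) → A) → (Fin (n+1) → B) → ℝ) : ℝ :=
  ∑ i : Fin (n+1), cmi μ (idxLe n i) i (idxLt n i)

/-- A family of channel kernels `Q_i(b_i | b^{i-1}, a^i)`: nonnegative, summing to one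
over `b_i`, and depending only on `(a^i, b^i)`. -/
def IsChannel (Q : Fin (n+1) → (Fin (n+1) → A) → (Fin (n+1) → B) → ℝ) : Prop :=
  (∀ i a b, 0 ≤ Q i a b) ∧
  (∀ i a b, ∑ x : B, Q i a (Function.update b i x) = 1) ∧
  (∀ (i : Fin (n+1)) (a a' : Fin (n+1) → A) (b b' : Fin (n+1) → B),
    (∀ j : Fin (n+1), (j:ℕ) ≤ (i:ℕ) → a j = a' j) →
    (∀ j : Fin (n+1), (j:ℕ) ≤ (i:ℕ) → b j = b' j) → Q i a b = Q i a' b')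

/-- A family of feedback input kernels `P_i(a_i | a^{i-1}, b^{i-1})`: nonnegative,
summing to one over `a_i`, and depending only on `(a^i, b^{i-1})`. -/
def IsInput (P : Fin (n+1) → (Fin (n+1) → A) → (Fin (n+1) → B) → ℝ) : Prop :=
  (∀ i a b, 0 ≤ P i a b) ∧
  (∀ i a b, ∑ x : A, P i (Function.update a i x) b = 1) ∧
  (∀ (i : Fin (n+1)) (a a' : Fin (n+1) → A) (b b' : Fin (n+1) → B),
    (∀ j : Fin (n+1), (j:ℕ) ≤ (i:ℕ) → a j = a' j) →
    (∀ j : Fin (n+1), (j:ℕ) < (i:ℕ) → b j = b' j) → P i a b = P i a' b')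

/-- The joint pmf induced by channel kernels `Q` and input kernels `P`. -/
noncomputable def joint (Q P : Fin (n+1) → (Fin (n+1) → A) → (Fin (n+1) → B) → ℝ)
    (a : Fin (n+1) → A) (b : Fin (n+1) → B) : ℝ :=
  ∏ i : Fin (n+1), Q i a b * P i a b

set_option linter.unusedSectionVars false
set_option linter.unusedVariables false
namespace Stmt5Aux

open Function Finset

variable {n : ℕ} {A B : Type} [Fintype A] [Fintype B] [DecidableEq A] [DecidableEq B]

/-! ### index set lemmas -/

lemma mem_idxLe {i j : Fin (n+1)} : j ∈ idxLe n i ↔ (j:ℕ) ≤ (i:ℕ) := by simp [idxLe]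
lemma mem_idxLt {i j : Fin (n+1)} : j ∈ idxLt n i ↔ (j:ℕ) < (i:ℕ) := by simp [idxLt]
lemma mem_idxWin {i j : Fin (n+1)} {M : ℕ} :
    j ∈ idxWin n i M ↔ (j:ℕ) < (i:ℕ) ∧ (i:ℕ) ≤ (j:ℕ) + M := by simp [idxWin]

lemma notMem_idxLt {i : Fin (n+1)} : i ∉ idxLt n i := by simp [mem_idxLt]
lemma notMem_idxWin {i : Fin (n+1)} {M : ℕ} : i ∉ idxWin n i M := by simp [mem_idxWin]
lemma idxWin_subset_idxLt {i : Fin (n+1)} {M : ℕ} : idxWin n i M ⊆ idxLt n i :=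
  fun j hj => mem_idxLt.2 (mem_idxWin.1 hj).1
lemma insert_idxLt (i : Fin (n+1)) : insert i (idxLt n i) = idxLe n i := by
  ext j
  simp only [Finset.mem_insert, mem_idxLt, mem_idxLe, Fin.ext_iff]
  omega

/-! ### generic marginal lemmas -/

variable {μ ν : (Fin (n+1) → A) → (Fin (n+1) → B) → ℝ}
  {SA SB : Finset (Fin (n+1))} {a : Fin (n+1) → A} {b : Fin (n+1) → B}

lemma marg_nonneg (hμ : ∀ a b, 0 ≤ μ a b) : 0 ≤ marg μ SA SB a b := by
  refine Finset.sum_nonneg fun a' _ => Finset.sum_nonneg fun b' _ => ?_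
  split
  · exact hμ _ _
  · exact le_refl 0

lemma margB_nonneg (hμ : ∀ a b, 0 ≤ μ a b) : 0 ≤ margB μ SB b := by
  refine Finset.sum_nonneg fun a' _ => Finset.sum_nonneg fun b' _ => ?_
  split
  · exact hμ _ _
  · exact le_refl 0

lemma marg_empty_left : marg μ ∅ SB a b = margB μ SB b := by
  simp [marg, margB]

lemma marg_mono (hμ : ∀ a b, 0 ≤ μ a b) {SA' SB' : Finset (Fin (n+1))}
    (hA : SA ⊆ SA') (hB : SB ⊆ SB') : marg μ SA' SB' a b ≤ marg μ SA SB a b := by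
  refine Finset.sum_le_sum fun a' _ => Finset.sum_le_sum fun b' _ => ?_
  split_ifs with h1 h2 h2
  · exact le_refl _
  · exact absurd ⟨fun j hj => h1.1 j (hA hj), fun j hj => h1.2 j (hB hj)⟩ h2
  · exact hμ _ _
  · exact le_refl 0

lemma margB_mono (hμ : ∀ a b, 0 ≤ μ a b) {SB' : Finset (Fin (n+1))}
    (hB : SB ⊆ SB') : margB μ SB' b ≤ margB μ SB b := by
  refine Finset.sum_le_sum fun a' _ => Finset.sum_le_sum fun b' _ => ?_
  split_ifs with h1 h2 h2
  · exact le_refl _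
  · exact absurd (fun j hj => h1 j (hB hj)) h2
  · exact hμ _ _
  · exact le_refl 0

lemma marg_le_margB (hμ : ∀ a b, 0 ≤ μ a b) : marg μ SA SB a b ≤ margB μ SB b := by
  rw [← marg_empty_left (a := a)]
  exact marg_mono hμ (Finset.empty_subset _) (le_refl _)

lemma self_le_marg (hμ : ∀ a b, 0 ≤ μ a b) : μ a b ≤ marg μ SA SB a b := by
  have h1 : (if (∀ j ∈ SA, a j = a j) ∧ (∀ j ∈ SB, b j = b j) then μ a b else 0) = μ a b := by
    simp
  calc μ a b = _ := h1.symm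
    _ ≤ ∑ b' : Fin (n+1) → B,
        (if (∀ j ∈ SA, a j = a j) ∧ (∀ j ∈ SB, b' j = b j) then μ a b' else 0) := by
        refine Finset.single_le_sum (f := fun b' => if (∀ j ∈ SA, a j = a j) ∧ (∀ j ∈ SB, b' j = b j) then μ a b' else 0) (fun b' _ => ?_) (Finset.mem_univ b)
        split
        · exact hμ _ _
        · exact le_refl 0
    _ ≤ marg μ SA SB a b := by
        refine Finset.single_le_sum (f := fun a' => ∑ b' : Fin (n+1) → B,
          (if (∀ j ∈ SA, a' j = a j) ∧ (∀ j ∈ SB, b' j = b j) then μ a' b' else 0))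
          (fun a' _ => ?_) (Finset.mem_univ a)
        refine Finset.sum_nonneg fun b' _ => ?_
        split
        · exact hμ _ _
        · exact le_refl 0

lemma marg_congr {a' : Fin (n+1) → A} {b' : Fin (n+1) → B}
    (hA : ∀ j ∈ SA, a j = a' j) (hB : ∀ j ∈ SB, b j = b' j) :
    marg μ SA SB a b = marg μ SA SB a' b' := by
  refine Finset.sum_congr rfl fun a'' _ => Finset.sum_congr rfl fun b'' _ => ?_
  refine if_congr ?_ rfl rfl
  constructor
  · rintro ⟨h1, h2⟩
    exact ⟨fun j hj => (h1 j hj).trans (hA j hj), fun j hj => (h2 j hj).trans (hB j hj)⟩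
  · rintro ⟨h1, h2⟩
    exact ⟨fun j hj => (h1 j hj).trans (hA j hj).symm, fun j hj => (h2 j hj).trans (hB j hj).symm⟩

lemma margB_congr {b' : Fin (n+1) → B} (hB : ∀ j ∈ SB, b j = b' j) :
    margB μ SB b = margB μ SB b' := by
  refine Finset.sum_congr rfl fun a'' _ => Finset.sum_congr rfl fun b'' _ => ?_
  refine if_congr ?_ rfl rfl
  constructor
  · exact fun h2 j hj => (h2 j hj).trans (hB j hj)
  · exact fun h2 j hj => (h2 j hj).trans (hB j hj).symm

/-! ### chain rules -/

lemma marg_chainB {i : Fin (n+1)} (hi : i ∉ SB) :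
    ∑ x : B, marg μ SA (insert i SB) a (Function.update b i x) = marg μ SA SB a b := by
  unfold marg
  rw [Finset.sum_comm]
  refine Finset.sum_congr rfl fun a' _ => ?_
  rw [Finset.sum_comm]
  refine Finset.sum_congr rfl fun b' _ => ?_
  have hiff : ∀ x : B,
      ((∀ j ∈ SA, a' j = a j) ∧ ∀ j ∈ insert i SB, b' j = Function.update b i x j) ↔
      (((∀ j ∈ SA, a' j = a j) ∧ ∀ j ∈ SB, b' j = b j) ∧ b' i = x) := by
    intro x
    constructor
    · rintro ⟨h1, h2⟩
      refine ⟨⟨h1, fun j hj => ?_⟩, ?_⟩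
      · have := h2 j (Finset.mem_insert_of_mem hj)
        rwa [Function.update_of_ne (fun h : j = i => hi (h ▸ hj))] at this
      · simpa using h2 i (Finset.mem_insert_self i SB)
    · rintro ⟨⟨h1, h2⟩, h3⟩
      refine ⟨h1, fun j hj => ?_⟩
      rcases Finset.mem_insert.1 hj with rfl | hj
      · simpa using h3
      · rw [Function.update_of_ne (fun h : j = i => hi (h ▸ hj))]
        exact h2 j hj
  simp_rw [hiff]
  by_cases hC : (∀ j ∈ SA, a' j = a j) ∧ ∀ j ∈ SB, b' j = b j
  · simp only [eq_true hC, true_and, if_true]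
    simp
  · simp only [eq_false hC, false_and, if_false]
    simp

lemma marg_chainA {i : Fin (n+1)} (hi : i ∉ SA) :
    ∑ x : A, marg μ (insert i SA) SB (Function.update a i x) b = marg μ SA SB a b := by
  unfold marg
  rw [Finset.sum_comm]
  refine Finset.sum_congr rfl fun a' _ => ?_
  rw [Finset.sum_comm]
  refine Finset.sum_congr rfl fun b' _ => ?_
  have hiff : ∀ x : A,
      ((∀ j ∈ insert i SA, a' j = Function.update a i x j) ∧ ∀ j ∈ SB, b' j = b j) ↔
      (((∀ j ∈ SA, a' j = a j) ∧ ∀ j ∈ SB, b' j = b j) ∧ a' i = x) := by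
    intro x
    constructor
    · rintro ⟨h1, h2⟩
      refine ⟨⟨fun j hj => ?_, h2⟩, ?_⟩
      · have := h1 j (Finset.mem_insert_of_mem hj)
        rwa [Function.update_of_ne (fun h : j = i => hi (h ▸ hj))] at this
      · simpa using h1 i (Finset.mem_insert_self i SA)
    · rintro ⟨⟨h1, h2⟩, h3⟩
      refine ⟨fun j hj => ?_, h2⟩
      rcases Finset.mem_insert.1 hj with rfl | hj
      · simpa using h3
      · rw [Function.update_of_ne (fun h : j = i => hi (h ▸ hj))]
        exact h1 j hj
  simp_rw [hiff]
  by_cases hC : (∀ j ∈ SA, a' j = a j) ∧ ∀ j ∈ SB, b' j = b j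
  · simp only [eq_true hC, true_and, if_true]
    simp
  · simp only [eq_false hC, false_and, if_false]
    simp

lemma margB_chain {i : Fin (n+1)} (hi : i ∉ SB) :
    ∑ x : B, margB μ (insert i SB) (Function.update b i x) = margB μ SB b := by
  unfold margB
  rw [Finset.sum_comm]
  refine Finset.sum_congr rfl fun a' _ => ?_
  rw [Finset.sum_comm]
  refine Finset.sum_congr rfl fun b' _ => ?_
  have hiff : ∀ x : B,
      (∀ j ∈ insert i SB, b' j = Function.update b i x j) ↔
      ((∀ j ∈ SB, b' j = b j) ∧ b' i = x) := by
    intro x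
    constructor
    · intro h2
      refine ⟨fun j hj => ?_, ?_⟩
      · have := h2 j (Finset.mem_insert_of_mem hj)
        rwa [Function.update_of_ne (fun h : j = i => hi (h ▸ hj))] at this
      · simpa using h2 i (Finset.mem_insert_self i SB)
    · rintro ⟨h2, h3⟩ j hj
      rcases Finset.mem_insert.1 hj with rfl | hj
      · simpa using h3
      · rw [Function.update_of_ne (fun h : j = i => hi (h ▸ hj))]
        exact h2 j hj
  simp_rw [hiff]
  by_cases hC : ∀ j ∈ SB, b' j = b j
  · simp only [eq_true hC, true_and, if_true]
    simp
  · simp only [eq_false hC, false_and, if_false]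
    simp

/-! ### sum over coordinate updates -/

lemma sum_sum_update {ι γ : Type} [Fintype ι] [DecidableEq ι] [Fintype γ] [DecidableEq γ]
    (i : ι) (F : (ι → γ) → ℝ) :
    ∑ f : ι → γ, ∑ x : γ, F (Function.update f i x)
      = (Fintype.card γ : ℝ) * ∑ f : ι → γ, F f := by
  classical
  set e := Equiv.funSplitAt i γ with he
  have key : ∀ (f : ι → γ) (x : γ),
      Function.update f i x = e.symm (x, (e f).2) := by
    intro f x
    funext j
    by_cases h : j = i
    · subst h
      simp [he, Equiv.funSplitAt, Equiv.piSplitAt]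
    · simp [he, Equiv.funSplitAt, Equiv.piSplitAt, h, Function.update_of_ne h]
  calc ∑ f : ι → γ, ∑ x : γ, F (Function.update f i x)
      = ∑ f : ι → γ, ∑ x : γ, F (e.symm (x, (e f).2)) := by simp_rw [key]
    _ = ∑ p : γ × ({ j // j ≠ i } → γ), ∑ x : γ, F (e.symm (x, p.2)) :=
        Equiv.sum_comp e (fun p => ∑ x : γ, F (e.symm (x, p.2)))
    _ = ∑ c : γ, ∑ g : { j // j ≠ i } → γ, ∑ x : γ, F (e.symm (x, g)) :=
        Fintype.sum_prod_type _
    _ = (Fintype.card γ : ℝ) * ∑ g : { j // j ≠ i } → γ, ∑ x : γ, F (e.symm (x, g)) := by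
        rw [Finset.sum_const, nsmul_eq_mul, Fintype.card]
    _ = (Fintype.card γ : ℝ) * ∑ f : ι → γ, F f := by
        congr 1
        rw [← Equiv.sum_comp e.symm F, Fintype.sum_prod_type, Finset.sum_comm]

lemma sum_pin {ι γ : Type} [Fintype ι] [DecidableEq ι] [Fintype γ] [DecidableEq γ]
    (i : ι) (c : γ) (F : (ι → γ) → ℝ) (hF : ∀ f x, F (Function.update f i x) = F f) :
    (Fintype.card γ : ℝ) * ∑ f : ι → γ, (if f i = c then F f else 0) = ∑ f : ι → γ, F f := by
  have h := sum_sum_update i (fun f => if f i = c then F f else 0)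
  rw [← h]
  refine Finset.sum_congr rfl fun f _ => ?_
  have : ∀ x, (if Function.update f i x i = c then F (Function.update f i x) else 0)
      = if x = c then F f else 0 := by
    intro x
    rw [Function.update_self, hF]
  simp_rw [this]
  simp

/-! ### counting -/

lemma card_match {ι γ : Type} [Fintype ι] [DecidableEq ι] [Fintype γ] [DecidableEq γ]
    (S : Finset ι) (c : ι → γ) (p : (ι → γ) → Prop) [DecidablePred p]
    (hp : ∀ f, p f ↔ ∀ j ∈ S, f j = c j) :
    (Finset.univ.filter p).card = Fintype.card γ ^ (Fintype.card { j : ι // j ∉ S }) := by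
  classical
  rw [← Fintype.card_subtype]
  have e1 : { f : ι → γ // p f } ≃ { f : ι → γ // ∀ j ∈ S, f j = c j } :=
    Equiv.subtypeEquivRight hp
  have e2 : { f : ι → γ // ∀ j ∈ S, f j = c j } ≃ ({ j : ι // j ∉ S } → γ) :=
    { toFun := fun f j => f.1 j.1
      invFun := fun g => ⟨fun j => if h : j ∈ S then c j else g ⟨j, h⟩,
        fun j hj => dif_pos hj⟩
      left_inv := by
        intro f
        refine Subtype.ext (funext fun j => ?_)
        by_cases h : j ∈ S
        · simp [h, f.2 j h]
        · simp [h]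
      right_inv := by
        intro g
        funext j
        simp [j.2] }
  rw [Fintype.card_congr (e1.trans e2), Fintype.card_fun]
/-! ### four-fold sum swap -/

lemma sum_swap4 {W X Y Z : Type} [Fintype W] [Fintype X] [Fintype Y] [Fintype Z]
    (f : W → X → Y → Z → ℝ) :
    ∑ w : W, ∑ x : X, ∑ y : Y, ∑ z : Z, f w x y z
      = ∑ y : Y, ∑ z : Z, ∑ w : W, ∑ x : X, f w x y z := by
  calc ∑ w : W, ∑ x : X, ∑ y : Y, ∑ z : Z, f w x y z
      = ∑ w : W, ∑ y : Y, ∑ x : X, ∑ z : Z, f w x y z :=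
        Finset.sum_congr rfl fun w _ => Finset.sum_comm
    _ = ∑ y : Y, ∑ w : W, ∑ x : X, ∑ z : Z, f w x y z := Finset.sum_comm
    _ = ∑ y : Y, ∑ w : W, ∑ z : Z, ∑ x : X, f w x y z :=
        Finset.sum_congr rfl fun y _ => Finset.sum_congr rfl fun w _ => Finset.sum_comm
    _ = ∑ y : Y, ∑ z : Z, ∑ w : W, ∑ x : X, f w x y z :=
        Finset.sum_congr rfl fun y _ => Finset.sum_comm

/-! ### aggregation lemmas -/

lemma sum_marg_mul (μ : (Fin (n+1) → A) → (Fin (n+1) → B) → ℝ)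
    (SA SB : Finset (Fin (n+1))) (L : (Fin (n+1) → A) → (Fin (n+1) → B) → ℝ)
    (hL : ∀ a a' b b', (∀ j ∈ SA, a j = a' j) → (∀ j ∈ SB, b j = b' j) → L a b = L a' b') :
    ∑ a : Fin (n+1) → A, ∑ b : Fin (n+1) → B, marg μ SA SB a b * L a b
      = ((Fintype.card A ^ Fintype.card { j : Fin (n+1) // j ∉ SA } : ℕ) : ℝ)
        * ((Fintype.card B ^ Fintype.card { j : Fin (n+1) // j ∉ SB } : ℕ) : ℝ)
        * ∑ a : Fin (n+1) → A, ∑ b : Fin (n+1) → B, μ a b * L a b := by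
  have step1 : ∀ (a' : Fin (n+1) → A) (b' : Fin (n+1) → B),
      (∑ a : Fin (n+1) → A, ∑ b : Fin (n+1) → B,
        if (∀ j ∈ SA, a' j = a j) ∧ (∀ j ∈ SB, b' j = b j) then μ a' b' * L a b else 0)
      = ((Fintype.card A ^ Fintype.card { j : Fin (n+1) // j ∉ SA } : ℕ) : ℝ)
        * ((Fintype.card B ^ Fintype.card { j : Fin (n+1) // j ∉ SB } : ℕ) : ℝ)
        * (μ a' b' * L a' b') := by
    intro a' b'
    have hrw : ∀ (a : Fin (n+1) → A) (b : Fin (n+1) → B),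
        (if (∀ j ∈ SA, a' j = a j) ∧ (∀ j ∈ SB, b' j = b j) then μ a' b' * L a b else 0)
        = if (∀ j ∈ SA, a' j = a j) then
            (if (∀ j ∈ SB, b' j = b j) then μ a' b' * L a' b' else 0) else 0 := by
      intro a b
      by_cases h1 : (∀ j ∈ SA, a' j = a j)
      · by_cases h2 : (∀ j ∈ SB, b' j = b j)
        · rw [if_pos ⟨h1, h2⟩, if_pos h1, if_pos h2, hL a' a b' b h1 h2]
        · rw [if_neg (fun h => h2 h.2), if_pos h1, if_neg h2]
      · rw [if_neg (fun h => h1 h.1), if_neg h1]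
    simp_rw [hrw]
    have hinner : (∑ b : Fin (n+1) → B,
        if (∀ j ∈ SB, b' j = b j) then μ a' b' * L a' b' else 0)
        = ((Fintype.card B ^ Fintype.card { j : Fin (n+1) // j ∉ SB } : ℕ) : ℝ)
          * (μ a' b' * L a' b') := by
      rw [← Finset.sum_filter, Finset.sum_const,
        card_match SB b' _ (fun f => ⟨fun h j hj => (h j hj).symm, fun h j hj => (h j hj).symm⟩),
        nsmul_eq_mul]
    have houter : ∀ (r : ℝ), (∑ a : Fin (n+1) → A,
        if (∀ j ∈ SA, a' j = a j) then r else 0)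
        = ((Fintype.card A ^ Fintype.card { j : Fin (n+1) // j ∉ SA } : ℕ) : ℝ) * r := by
      intro r
      rw [← Finset.sum_filter, Finset.sum_const,
        card_match SA a' _ (fun f => ⟨fun h j hj => (h j hj).symm, fun h j hj => (h j hj).symm⟩),
        nsmul_eq_mul]
    have hsplit : ∀ (a : Fin (n+1) → A), (∑ b : Fin (n+1) → B,
        if (∀ j ∈ SA, a' j = a j) then
          (if (∀ j ∈ SB, b' j = b j) then μ a' b' * L a' b' else 0) else 0)
        = if (∀ j ∈ SA, a' j = a j) then
            ((Fintype.card B ^ Fintype.card { j : Fin (n+1) // j ∉ SB } : ℕ) : ℝ)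
              * (μ a' b' * L a' b') else 0 := by
      intro a
      by_cases h1 : (∀ j ∈ SA, a' j = a j)
      · simp only [if_pos h1]
        exact hinner
      · simp only [if_neg h1, Finset.sum_const_zero]
    simp_rw [hsplit]
    rw [houter]
    ring
  unfold marg
  calc ∑ a : Fin (n+1) → A, ∑ b : Fin (n+1) → B,
        (∑ a' : Fin (n+1) → A, ∑ b' : Fin (n+1) → B,
          if (∀ j ∈ SA, a' j = a j) ∧ (∀ j ∈ SB, b' j = b j) then μ a' b' else 0) * L a b
      = ∑ a : Fin (n+1) → A, ∑ b : Fin (n+1) → B,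
          ∑ a' : Fin (n+1) → A, ∑ b' : Fin (n+1) → B,
          (if (∀ j ∈ SA, a' j = a j) ∧ (∀ j ∈ SB, b' j = b j) then μ a' b' * L a b else 0) := by
        refine Finset.sum_congr rfl fun a _ => Finset.sum_congr rfl fun b _ => ?_
        rw [Finset.sum_mul]
        refine Finset.sum_congr rfl fun a' _ => ?_
        rw [Finset.sum_mul]
        refine Finset.sum_congr rfl fun b' _ => ?_
        rw [ite_mul, zero_mul]
    _ = ∑ a' : Fin (n+1) → A, ∑ b' : Fin (n+1) → B,
          ∑ a : Fin (n+1) → A, ∑ b : Fin (n+1) → B,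
          (if (∀ j ∈ SA, a' j = a j) ∧ (∀ j ∈ SB, b' j = b j) then μ a' b' * L a b else 0) :=
        sum_swap4 _
    _ = ∑ a' : Fin (n+1) → A, ∑ b' : Fin (n+1) → B,
          ((Fintype.card A ^ Fintype.card { j : Fin (n+1) // j ∉ SA } : ℕ) : ℝ)
          * ((Fintype.card B ^ Fintype.card { j : Fin (n+1) // j ∉ SB } : ℕ) : ℝ)
          * (μ a' b' * L a' b') :=
        Finset.sum_congr rfl fun a' _ => Finset.sum_congr rfl fun b' _ => step1 a' b'
    _ = _ := by
        simp_rw [← Finset.mul_sum]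

lemma card_notMem_empty : Fintype.card { j : Fin (n+1) // j ∉ (∅ : Finset (Fin (n+1))) } = n+1 := by
  rw [Fintype.card_subtype]
  simp

lemma sum_margB_mul [Nonempty A] (μ : (Fin (n+1) → A) → (Fin (n+1) → B) → ℝ)
    (SB : Finset (Fin (n+1))) (L : (Fin (n+1) → B) → ℝ)
    (hL : ∀ b b', (∀ j ∈ SB, b j = b' j) → L b = L b') :
    ∑ b : Fin (n+1) → B, margB μ SB b * L b
      = ((Fintype.card B ^ Fintype.card { j : Fin (n+1) // j ∉ SB } : ℕ) : ℝ)
        * ∑ a : Fin (n+1) → A, ∑ b : Fin (n+1) → B, μ a b * L b := by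
  have h := sum_marg_mul μ ∅ SB (fun _ b => L b)
    (fun a a' b b' _ hB => hL b b' hB)
  simp_rw [marg_empty_left] at h
  rw [Finset.sum_const, card_notMem_empty, nsmul_eq_mul] at h
  have hcu : (Finset.univ : Finset (Fin (n+1) → A)).card = Fintype.card A ^ (n+1) := by
    rw [Finset.card_univ, Fintype.card_fun, Fintype.card_fin]
  rw [hcu] at h
  have hcard : ((Fintype.card A ^ (n+1) : ℕ) : ℝ) ≠ 0 :=
    Nat.cast_ne_zero.mpr (pow_ne_zero _ Fintype.card_ne_zero)
  exact mul_left_cancel₀ hcard (by rw [h]; ring)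

lemma gibbs {ι : Type} [Fintype ι] (p q : ι → ℝ) (hp : ∀ x, 0 ≤ p x) (hq : ∀ x, 0 ≤ q x)
    (h0 : ∀ x, q x = 0 → p x = 0) (hs : ∑ x : ι, q x ≤ ∑ x : ι, p x) :
    0 ≤ ∑ x : ι, p x * Real.log (p x / q x) := by
  have key : ∀ x, p x - q x ≤ p x * Real.log (p x / q x) := by
    intro x
    rcases eq_or_lt_of_le (hp x) with h | hpx
    · rw [← h]
      simpa using hq x
    · have hqx : 0 < q x :=
        lt_of_le_of_ne (hq x) (fun h' => by
          have := h0 x h'.symm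
          exact absurd this.symm (ne_of_lt hpx))
      have hlog := Real.log_le_sub_one_of_pos (div_pos hqx hpx)
      rw [Real.log_div (ne_of_gt hqx) (ne_of_gt hpx)] at hlog
      rw [Real.log_div (ne_of_gt hpx) (ne_of_gt hqx)]
      have h3 := mul_le_mul_of_nonneg_left hlog hpx.le
      have h4 : p x * (q x / p x) = q x := by
        field_simp
      rw [mul_sub, mul_sub, h4, mul_one] at h3
      rw [mul_sub]
      linarith
  calc (0:ℝ) ≤ ∑ x : ι, (p x - q x) := by
        rw [Finset.sum_sub_distrib]
        linarith
    _ ≤ ∑ x : ι, p x * Real.log (p x / q x) := Finset.sum_le_sum fun x _ => key x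
lemma margB_transfer [Nonempty A] [Nonempty B] {S T : Finset (Fin (n+1))} (hST : S ⊆ T)
    (hEq : ∀ b, margB μ T b = margB ν T b) (b : Fin (n+1) → B) :
    margB μ S b = margB ν S b := by
  classical
  have key : ∀ (κ : (Fin (n+1) → A) → (Fin (n+1) → B) → ℝ),
      ∑ b' : Fin (n+1) → B, margB κ T b' * (if ∀ j ∈ S, b' j = b j then (1:ℝ) else 0)
        = ((Fintype.card B ^ Fintype.card { j : Fin (n+1) // j ∉ T } : ℕ) : ℝ) * margB κ S b := by
    intro κ
    rw [sum_margB_mul κ T _ (fun b1 b2 h12 => by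
      refine if_congr ?_ rfl rfl
      exact forall₂_congr fun j hj => by rw [h12 j (hST hj)])]
    congr 1
    unfold margB
    refine Finset.sum_congr rfl fun a' _ => Finset.sum_congr rfl fun b'' _ => ?_
    rw [mul_ite, mul_one, mul_zero]
  have h1 := key μ
  have h2 := key ν
  simp_rw [hEq] at h1
  have hne : ((Fintype.card B ^ Fintype.card { j : Fin (n+1) // j ∉ T } : ℕ) : ℝ) ≠ 0 :=
    Nat.cast_ne_zero.mpr (pow_ne_zero _ Fintype.card_ne_zero)
  exact mul_left_cancel₀ hne (h1.symm.trans h2)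

/-! ### prefix products for the joint distribution -/

noncomputable def Gpre (Q P : Fin (n+1) → (Fin (n+1) → A) → (Fin (n+1) → B) → ℝ)
    (m : ℕ) (a : Fin (n+1) → A) (b : Fin (n+1) → B) : ℝ :=
  ∏ j ∈ Finset.univ.filter (fun j : Fin (n+1) => (j:ℕ) < m), Q j a b * P j a b

variable {Q P : Fin (n+1) → (Fin (n+1) → A) → (Fin (n+1) → B) → ℝ}

lemma Gpre_top {a b} : Gpre Q P (n+1) a b = joint Q P a b := by
  unfold Gpre joint
  rw [Finset.filter_true_of_mem (fun j _ => j.isLt)]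

lemma Gpre_zero {a b} : Gpre Q P 0 a b = 1 := by
  unfold Gpre
  rw [Finset.filter_false_of_mem (fun j _ => by omega), Finset.prod_empty]

lemma Gpre_succ {m : ℕ} (hm : m ≤ n) (a b) :
    Gpre Q P (m+1) a b
      = Gpre Q P m a b * (Q ⟨m, by omega⟩ a b * P ⟨m, by omega⟩ a b) := by
  unfold Gpre
  have hset : Finset.univ.filter (fun j : Fin (n+1) => (j:ℕ) < m+1)
      = insert ⟨m, by omega⟩ (Finset.univ.filter (fun j : Fin (n+1) => (j:ℕ) < m)) := by
    ext j
    simp only [Finset.mem_filter, Finset.mem_univ, true_and, Finset.mem_insert, Fin.ext_iff]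
    omega
  rw [hset, Finset.prod_insert (by simp)]
  ring

lemma Gpre_congr (hQ : IsChannel Q) (hP : IsInput P) {m : ℕ} {a a' b b'}
    (hA : ∀ j : Fin (n+1), (j:ℕ) < m → a j = a' j)
    (hB : ∀ j : Fin (n+1), (j:ℕ) < m → b j = b' j) :
    Gpre Q P m a b = Gpre Q P m a' b' := by
  refine Finset.prod_congr rfl fun j hj => ?_
  have hjm : (j:ℕ) < m := by
    simpa using (Finset.mem_filter.1 hj).2
  rw [hQ.2.2 j a a' b b' (fun k hk => hA k (lt_of_le_of_lt hk hjm))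
      (fun k hk => hB k (lt_of_le_of_lt hk hjm)),
    hP.2.2 j a a' b b' (fun k hk => hA k (lt_of_le_of_lt hk hjm))
      (fun k hk => hB k (lt_of_le_of_lt (le_of_lt hk) hjm))]

lemma lemT (hQ : IsChannel Q) (hP : IsInput P) :
    ∀ (d : ℕ), d ≤ n+1 → ∀ (SA SB : Finset (Fin (n+1))) (a : Fin (n+1) → A) (b : Fin (n+1) → B),
    (∀ j ∈ SA, (j:ℕ) < n+1-d) → (∀ j ∈ SB, (j:ℕ) < n+1-d) →
    (∑ a' : Fin (n+1) → A, ∑ b' : Fin (n+1) → B,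
      (if (∀ j ∈ SA, a' j = a j) ∧ (∀ j ∈ SB, b' j = b j) then Gpre Q P (n+1-d) a' b' else 0))
      = ((Fintype.card A * Fintype.card B : ℕ) : ℝ)^d * marg (joint Q P) SA SB a b := by
  intro d
  induction d with
  | zero =>
    intro _ SA SB a b _ _
    simp only [Nat.sub_zero, pow_zero, one_mul]
    unfold marg
    refine Finset.sum_congr rfl fun a' _ => Finset.sum_congr rfl fun b' _ => ?_
    rw [Gpre_top]
  | succ d ih =>
    intro hd SA SB a b hSA hSB
    have hnd : n+1-(d+1) = n-d := by omega
    have hmn : n - d ≤ n := by omega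
    have hm1 : n+1-d = (n-d)+1 := by omega
    rw [hnd] at hSA hSB ⊢
    set m : ℕ := n - d with hmdef
    set i : Fin (n+1) := ⟨m, by omega⟩ with hidef
    have hiSA : i ∉ SA := fun h => by have := hSA i h; simp [hidef] at this
    have hiSB : i ∉ SB := fun h => by have := hSB i h; simp [hidef] at this
    have hupdA : ∀ (a' : Fin (n+1) → A) (x : A) (j), j ∈ SA → Function.update a' i x j = a' j :=
      fun a' x j hj => Function.update_of_ne (fun h : j = i => hiSA (h ▸ hj)) _ _
    have hupdB : ∀ (b' : Fin (n+1) → B) (y : B) (j), j ∈ SB → Function.update b' i y j = b' j :=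
      fun b' y j hj => Function.update_of_ne (fun h : j = i => hiSB (h ▸ hj)) _ _
    have key : ∀ (a' : Fin (n+1) → A) (b' : Fin (n+1) → B),
        (∑ x : A, ∑ y : B,
          (if (∀ j ∈ SA, Function.update a' i x j = a j) ∧
              (∀ j ∈ SB, Function.update b' i y j = b j)
           then Gpre Q P (m+1) (Function.update a' i x) (Function.update b' i y) else 0))
        = if (∀ j ∈ SA, a' j = a j) ∧ (∀ j ∈ SB, b' j = b j) then Gpre Q P m a' b' else 0 := by
      intro a' b'
      have hcond : ∀ (x : A) (y : B),
          ((∀ j ∈ SA, Function.update a' i x j = a j) ∧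
            (∀ j ∈ SB, Function.update b' i y j = b j))
          ↔ ((∀ j ∈ SA, a' j = a j) ∧ (∀ j ∈ SB, b' j = b j)) := by
        intro x y
        exact and_congr
          (forall₂_congr fun j hj => by rw [hupdA a' x j hj])
          (forall₂_congr fun j hj => by rw [hupdB b' y j hj])
      by_cases hc : (∀ j ∈ SA, a' j = a j) ∧ (∀ j ∈ SB, b' j = b j)
      · have hval : ∀ (x : A) (y : B),
            Gpre Q P (m+1) (Function.update a' i x) (Function.update b' i y)
            = Gpre Q P m a' b'
              * (P i (Function.update a' i x) b'
                * Q i (Function.update a' i x) (Function.update b' i y)) := by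
          intro x y
          rw [Gpre_succ hmn]
          have h1 : Gpre Q P m (Function.update a' i x) (Function.update b' i y)
              = Gpre Q P m a' b' :=
            Gpre_congr hQ hP
              (fun j hjm => (Function.update_of_ne (fun h : j = i => by
                  rw [h] at hjm; simp [hidef] at hjm) _ _))
              (fun j hjm => (Function.update_of_ne (fun h : j = i => by
                  rw [h] at hjm; simp [hidef] at hjm) _ _))
          have h2 : P i (Function.update a' i x) (Function.update b' i y)
              = P i (Function.update a' i x) b' := by
            refine hP.2.2 i _ _ _ _ (fun k _ => rfl) (fun k hk => ?_)
            exact Function.update_of_ne (fun h : k = i => by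
              rw [h] at hk; omega) _ _
          have : (⟨m, by omega⟩ : Fin (n+1)) = i := rfl
          rw [this, h1, h2]
          ring
        simp_rw [hcond]
        simp only [eq_true hc, if_true]
        simp_rw [hval, ← Finset.mul_sum, hQ.2.1, mul_one, hP.2.1, mul_one]
      · simp_rw [hcond]
        simp only [eq_false hc, if_false, Finset.sum_const_zero]
    have ih' := ih (by omega) SA SB a b
      (fun j hj => by rw [hm1]; exact lt_of_lt_of_le (hSA j hj) (by omega))
      (fun j hj => by rw [hm1]; exact lt_of_lt_of_le (hSB j hj) (by omega))
    rw [hm1] at ih'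
    calc ∑ a' : Fin (n+1) → A, ∑ b' : Fin (n+1) → B,
          (if (∀ j ∈ SA, a' j = a j) ∧ (∀ j ∈ SB, b' j = b j) then Gpre Q P m a' b' else 0)
        = ∑ a' : Fin (n+1) → A, ∑ b' : Fin (n+1) → B, ∑ x : A, ∑ y : B,
            (if (∀ j ∈ SA, Function.update a' i x j = a j) ∧
                (∀ j ∈ SB, Function.update b' i y j = b j)
             then Gpre Q P (m+1) (Function.update a' i x) (Function.update b' i y) else 0) := by
          refine Finset.sum_congr rfl fun a' _ => Finset.sum_congr rfl fun b' _ => ?_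
          exact (key a' b').symm
      _ = ∑ a' : Fin (n+1) → A, ∑ x : A, ∑ b' : Fin (n+1) → B, ∑ y : B,
            (if (∀ j ∈ SA, Function.update a' i x j = a j) ∧
                (∀ j ∈ SB, Function.update b' i y j = b j)
             then Gpre Q P (m+1) (Function.update a' i x) (Function.update b' i y) else 0) := by
          exact Finset.sum_congr rfl fun a' _ => Finset.sum_comm
      _ = (Fintype.card A : ℝ) * ∑ a' : Fin (n+1) → A, ∑ b' : Fin (n+1) → B, ∑ y : B,
            (if (∀ j ∈ SA, a' j = a j) ∧
                (∀ j ∈ SB, Function.update b' i y j = b j)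
             then Gpre Q P (m+1) a' (Function.update b' i y) else 0) :=
          sum_sum_update i (fun g => ∑ b' : Fin (n+1) → B, ∑ y : B,
            (if (∀ j ∈ SA, g j = a j) ∧ (∀ j ∈ SB, Function.update b' i y j = b j)
             then Gpre Q P (m+1) g (Function.update b' i y) else 0))
      _ = (Fintype.card A : ℝ) * ∑ a' : Fin (n+1) → A, ((Fintype.card B : ℝ) *
            ∑ b' : Fin (n+1) → B,
            (if (∀ j ∈ SA, a' j = a j) ∧ (∀ j ∈ SB, b' j = b j)
             then Gpre Q P (m+1) a' b' else 0)) := by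
          refine congrArg _ (Finset.sum_congr rfl fun a' _ => ?_)
          exact sum_sum_update i (fun g =>
            (if (∀ j ∈ SA, a' j = a j) ∧ (∀ j ∈ SB, g j = b j)
             then Gpre Q P (m+1) a' g else 0))
      _ = ((Fintype.card A * Fintype.card B : ℕ) : ℝ)^(d+1) * marg (joint Q P) SA SB a b := by
          rw [← Finset.mul_sum, ih']
          push_cast
          ring
lemma lemT' (hQ : IsChannel Q) (hP : IsInput P) (i : Fin (n+1)) {SA SB : Finset (Fin (n+1))}
    (hSA : ∀ j ∈ SA, (j:ℕ) ≤ (i:ℕ)) (hSB : ∀ j ∈ SB, (j:ℕ) ≤ (i:ℕ))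
    (a : Fin (n+1) → A) (b : Fin (n+1) → B) :
    (∑ a' : Fin (n+1) → A, ∑ b' : Fin (n+1) → B,
      (if (∀ j ∈ SA, a' j = a j) ∧ (∀ j ∈ SB, b' j = b j)
       then Gpre Q P ((i:ℕ)+1) a' b' else 0))
      = ((Fintype.card A * Fintype.card B : ℕ) : ℝ)^(n-(i:ℕ))
        * marg (joint Q P) SA SB a b := by
  have hi : (i:ℕ) ≤ n := by have := i.isLt; omega
  have h := lemT hQ hP (n-(i:ℕ)) (by omega) SA SB a b
    (fun j hj => by have := hSA j hj; omega)
    (fun j hj => by have := hSB j hj; omega)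
  rwa [show n+1-(n-(i:ℕ)) = (i:ℕ)+1 by omega] at h

lemma factQ [Nonempty A] [Nonempty B] (hQ : IsChannel Q) (hP : IsInput P)
    {i : Fin (n+1)} {SA SB : Finset (Fin (n+1))} {a : Fin (n+1) → A} {b : Fin (n+1) → B}
    (hiSB : i ∉ SB) (hSA : ∀ j ∈ SA, (j:ℕ) ≤ (i:ℕ)) (hSB : ∀ j ∈ SB, (j:ℕ) < (i:ℕ))
    (hconst : ∀ a' b', (∀ j ∈ SA, a' j = a j) → (∀ j ∈ insert i SB, b' j = b j) →
      Q i a' b' = Q i a b) :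
    marg (joint Q P) SA (insert i SB) a b = Q i a b * marg (joint Q P) SA SB a b := by
  classical
  have hi : (i:ℕ) ≤ n := by have := i.isLt; omega
  have hGs : ∀ (a' : Fin (n+1) → A) (b' : Fin (n+1) → B),
      Gpre Q P ((i:ℕ)+1) a' b' = Gpre Q P (i:ℕ) a' b' * (Q i a' b' * P i a' b') := by
    intro a' b'
    rw [Gpre_succ hi]
  have hGupdB : ∀ (a' : Fin (n+1) → A) (b' : Fin (n+1) → B) (y : B),
      Gpre Q P (i:ℕ) a' (Function.update b' i y) = Gpre Q P (i:ℕ) a' b' :=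
    fun a' b' y => Gpre_congr hQ hP (fun _ _ => rfl)
      (fun j hj => Function.update_of_ne (fun h : j = i => by rw [h] at hj; omega) _ _)
  have hPupdB : ∀ (a' : Fin (n+1) → A) (b' : Fin (n+1) → B) (y : B),
      P i a' (Function.update b' i y) = P i a' b' :=
    fun a' b' y => hP.2.2 i _ _ _ _ (fun _ _ => rfl)
      (fun k hk => Function.update_of_ne (fun h : k = i => by rw [h] at hk; omega) _ _)
  -- the three sums
  set Sins := ∑ a' : Fin (n+1) → A, ∑ b' : Fin (n+1) → B,
    (if (∀ j ∈ SA, a' j = a j) ∧ (∀ j ∈ insert i SB, b' j = b j)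
     then Gpre Q P ((i:ℕ)+1) a' b' else 0) with hSins
  set Ssb := ∑ a' : Fin (n+1) → A, ∑ b' : Fin (n+1) → B,
    (if (∀ j ∈ SA, a' j = a j) ∧ (∀ j ∈ SB, b' j = b j)
     then Gpre Q P ((i:ℕ)+1) a' b' else 0) with hSsb
  set Wins := ∑ a' : Fin (n+1) → A, ∑ b' : Fin (n+1) → B,
    (if (∀ j ∈ SA, a' j = a j) ∧ (∀ j ∈ insert i SB, b' j = b j)
     then Gpre Q P (i:ℕ) a' b' * P i a' b' else 0) with hWins
  set Wsb := ∑ a' : Fin (n+1) → A, ∑ b' : Fin (n+1) → B,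
    (if (∀ j ∈ SA, a' j = a j) ∧ (∀ j ∈ SB, b' j = b j)
     then Gpre Q P (i:ℕ) a' b' * P i a' b' else 0) with hWsb
  have step1 : Sins = Q i a b * Wins := by
    rw [hSins, hWins, Finset.mul_sum]
    refine Finset.sum_congr rfl fun a' _ => ?_
    rw [Finset.mul_sum]
    refine Finset.sum_congr rfl fun b' _ => ?_
    by_cases hc : (∀ j ∈ SA, a' j = a j) ∧ (∀ j ∈ insert i SB, b' j = b j)
    · rw [if_pos hc, if_pos hc, hGs, hconst a' b' hc.1 hc.2]
      ring
    · rw [if_neg hc, if_neg hc, mul_zero]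
  have step2 : (Fintype.card B : ℝ) * Wins = Wsb := by
    rw [hWins, hWsb, Finset.mul_sum]
    refine Finset.sum_congr rfl fun a' _ => ?_
    have hF : ∀ (b' : Fin (n+1) → B) (y : B),
        (if (∀ j ∈ SA, a' j = a j) ∧ (∀ j ∈ SB, Function.update b' i y j = b j)
         then Gpre Q P (i:ℕ) a' (Function.update b' i y) * P i a' (Function.update b' i y) else 0)
        = (if (∀ j ∈ SA, a' j = a j) ∧ (∀ j ∈ SB, b' j = b j)
           then Gpre Q P (i:ℕ) a' b' * P i a' b' else 0) := by
      intro b' y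
      rw [hGupdB, hPupdB]
      refine if_congr (and_congr Iff.rfl (forall₂_congr fun j hj => ?_)) rfl rfl
      rw [Function.update_of_ne (fun h : j = i => hiSB (h ▸ hj))]
    have hsplit : ∀ (b' : Fin (n+1) → B),
        (if (∀ j ∈ SA, a' j = a j) ∧ (∀ j ∈ insert i SB, b' j = b j)
         then Gpre Q P (i:ℕ) a' b' * P i a' b' else 0)
        = (if b' i = b i then
            (if (∀ j ∈ SA, a' j = a j) ∧ (∀ j ∈ SB, b' j = b j)
             then Gpre Q P (i:ℕ) a' b' * P i a' b' else 0) else 0) := by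
      intro b'
      by_cases h1 : b' i = b i
      · by_cases h2 : (∀ j ∈ SA, a' j = a j) ∧ (∀ j ∈ SB, b' j = b j)
        · rw [if_pos h1, if_pos h2,
            if_pos ⟨h2.1, (Finset.forall_mem_insert i SB _).2 ⟨h1, h2.2⟩⟩]
        · rw [if_pos h1, if_neg h2,
            if_neg (fun h => h2 ⟨h.1, fun j hj => h.2 j (Finset.mem_insert_of_mem hj)⟩)]
      · rw [if_neg h1, if_neg (fun h => h1 (h.2 i (Finset.mem_insert_self i SB)))]
    simp_rw [hsplit]
    exact sum_pin i (b i) _ (fun b' y => hF b' y)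
  have step3 : (Fintype.card B : ℝ) * Ssb = Wsb := by
    rw [hSsb, hWsb, Finset.mul_sum]
    refine Finset.sum_congr rfl fun a' _ => ?_
    rw [← sum_sum_update i (fun b' =>
      (if (∀ j ∈ SA, a' j = a j) ∧ (∀ j ∈ SB, b' j = b j)
       then Gpre Q P ((i:ℕ)+1) a' b' else 0))]
    refine Finset.sum_congr rfl fun b' _ => ?_
    have hrw : ∀ y : B,
        (if (∀ j ∈ SA, a' j = a j) ∧ (∀ j ∈ SB, Function.update b' i y j = b j)
         then Gpre Q P ((i:ℕ)+1) a' (Function.update b' i y) else 0)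
        = (if (∀ j ∈ SA, a' j = a j) ∧ (∀ j ∈ SB, b' j = b j)
           then Gpre Q P (i:ℕ) a' b' * P i a' b' * Q i a' (Function.update b' i y) else 0) := by
      intro y
      have hcnd : ((∀ j ∈ SA, a' j = a j) ∧ (∀ j ∈ SB, Function.update b' i y j = b j))
          ↔ ((∀ j ∈ SA, a' j = a j) ∧ (∀ j ∈ SB, b' j = b j)) :=
        and_congr Iff.rfl (forall₂_congr fun j hj => by
          rw [Function.update_of_ne (fun h : j = i => hiSB (h ▸ hj))])
      rw [if_congr hcnd rfl rfl]
      by_cases hc : (∀ j ∈ SA, a' j = a j) ∧ (∀ j ∈ SB, b' j = b j)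
      · rw [if_pos hc, if_pos hc, hGs, hGupdB, hPupdB]
        ring
      · rw [if_neg hc, if_neg hc]
    simp_rw [hrw]
    by_cases hc : (∀ j ∈ SA, a' j = a j) ∧ (∀ j ∈ SB, b' j = b j)
    · simp only [eq_true hc, if_true]
      rw [← Finset.mul_sum, hQ.2.1, mul_one]
    · simp only [eq_false hc, if_false, Finset.sum_const_zero]
  -- assemble
  have E1 := lemT' hQ hP i (SA := SA) (SB := insert i SB) hSA
    (fun j hj => by
      rcases Finset.mem_insert.1 hj with rfl | hj
      · exact le_refl _
      · exact le_of_lt (hSB j hj)) a b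
  have E2 := lemT' hQ hP i (SA := SA) (SB := SB) hSA
    (fun j hj => le_of_lt (hSB j hj)) a b
  rw [← hSins] at E1
  rw [← hSsb] at E2
  have hBne : (Fintype.card B : ℝ) ≠ 0 := Nat.cast_ne_zero.mpr Fintype.card_ne_zero
  have hNne : ((Fintype.card A * Fintype.card B : ℕ) : ℝ)^(n-(i:ℕ)) ≠ 0 := by
    refine pow_ne_zero _ (Nat.cast_ne_zero.mpr ?_)
    exact Nat.mul_ne_zero Fintype.card_ne_zero Fintype.card_ne_zero
  have hSQ : Sins = Q i a b * Ssb := by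
    refine mul_left_cancel₀ hBne ?_
    calc (Fintype.card B : ℝ) * Sins = Q i a b * ((Fintype.card B : ℝ) * Wins) := by
          rw [step1]; ring
      _ = Q i a b * ((Fintype.card B : ℝ) * Ssb) := by rw [step2, ← step3]
      _ = (Fintype.card B : ℝ) * (Q i a b * Ssb) := by ring
  refine mul_left_cancel₀ hNne ?_
  rw [← E1, hSQ, E2]
  ring
lemma factP [Nonempty A] [Nonempty B] (hQ : IsChannel Q) (hP : IsInput P)
    {i : Fin (n+1)} {SA SB : Finset (Fin (n+1))} {a : Fin (n+1) → A} {b : Fin (n+1) → B}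
    (hiSA : i ∉ SA) (hiSB : i ∉ SB)
    (hSA : ∀ j ∈ SA, (j:ℕ) ≤ (i:ℕ)) (hSB : ∀ j ∈ SB, (j:ℕ) < (i:ℕ))
    (hconstP : ∀ a' b', (∀ j ∈ insert i SA, a' j = a j) → (∀ j ∈ SB, b' j = b j) →
      P i a' b' = P i a b) :
    marg (joint Q P) (insert i SA) SB a b = P i a b * marg (joint Q P) SA SB a b := by
  classical
  have hi : (i:ℕ) ≤ n := by have := i.isLt; omega
  have hSAlt : ∀ j ∈ SA, (j:ℕ) < (i:ℕ) := by
    intro j hj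
    rcases lt_or_eq_of_le (hSA j hj) with h | h
    · exact h
    · exact absurd (Fin.ext h : j = i) (fun he => hiSA (he ▸ hj))
  have hGs : ∀ (a' : Fin (n+1) → A) (b' : Fin (n+1) → B),
      Gpre Q P ((i:ℕ)+1) a' b' = Gpre Q P (i:ℕ) a' b' * (Q i a' b' * P i a' b') := by
    intro a' b'
    rw [Gpre_succ hi]
  have hGupdB : ∀ (a' : Fin (n+1) → A) (b' : Fin (n+1) → B) (y : B),
      Gpre Q P (i:ℕ) a' (Function.update b' i y) = Gpre Q P (i:ℕ) a' b' :=
    fun a' b' y => Gpre_congr hQ hP (fun _ _ => rfl)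
      (fun j hj => Function.update_of_ne (fun h : j = i => by rw [h] at hj; omega) _ _)
  have hGupdA : ∀ (a' : Fin (n+1) → A) (x : A) (b' : Fin (n+1) → B),
      Gpre Q P (i:ℕ) (Function.update a' i x) b' = Gpre Q P (i:ℕ) a' b' :=
    fun a' x b' => Gpre_congr hQ hP
      (fun j hj => Function.update_of_ne (fun h : j = i => by rw [h] at hj; omega) _ _)
      (fun _ _ => rfl)
  set SinsA := ∑ a' : Fin (n+1) → A, ∑ b' : Fin (n+1) → B,
    (if (∀ j ∈ insert i SA, a' j = a j) ∧ (∀ j ∈ SB, b' j = b j)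
     then Gpre Q P ((i:ℕ)+1) a' b' else 0) with hSinsA
  set Ssb := ∑ a' : Fin (n+1) → A, ∑ b' : Fin (n+1) → B,
    (if (∀ j ∈ SA, a' j = a j) ∧ (∀ j ∈ SB, b' j = b j)
     then Gpre Q P ((i:ℕ)+1) a' b' else 0) with hSsb
  set V := ∑ a' : Fin (n+1) → A, ∑ b' : Fin (n+1) → B,
    (if (∀ j ∈ insert i SA, a' j = a j) ∧ (∀ j ∈ SB, b' j = b j)
     then Gpre Q P (i:ℕ) a' b' * Q i a' b' else 0) with hV
  set Uins := ∑ a' : Fin (n+1) → A, ∑ b' : Fin (n+1) → B,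
    (if (∀ j ∈ insert i SA, a' j = a j) ∧ (∀ j ∈ SB, b' j = b j)
     then Gpre Q P (i:ℕ) a' b' else 0) with hUins
  set U := ∑ a' : Fin (n+1) → A, ∑ b' : Fin (n+1) → B,
    (if (∀ j ∈ SA, a' j = a j) ∧ (∀ j ∈ SB, b' j = b j)
     then Gpre Q P (i:ℕ) a' b' else 0) with hU
  have step1 : SinsA = P i a b * V := by
    rw [hSinsA, hV, Finset.mul_sum]
    refine Finset.sum_congr rfl fun a' _ => ?_
    rw [Finset.mul_sum]
    refine Finset.sum_congr rfl fun b' _ => ?_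
    by_cases hc : (∀ j ∈ insert i SA, a' j = a j) ∧ (∀ j ∈ SB, b' j = b j)
    · rw [if_pos hc, if_pos hc, hGs, hconstP a' b' hc.1 hc.2]
      ring
    · rw [if_neg hc, if_neg hc, mul_zero]
  have step2 : (Fintype.card B : ℝ) * V = Uins := by
    rw [hV, hUins, Finset.mul_sum]
    refine Finset.sum_congr rfl fun a' _ => ?_
    rw [← sum_sum_update i (fun b' =>
      (if (∀ j ∈ insert i SA, a' j = a j) ∧ (∀ j ∈ SB, b' j = b j)
       then Gpre Q P (i:ℕ) a' b' * Q i a' b' else 0))]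
    refine Finset.sum_congr rfl fun b' _ => ?_
    have hrw : ∀ y : B,
        (if (∀ j ∈ insert i SA, a' j = a j) ∧ (∀ j ∈ SB, Function.update b' i y j = b j)
         then Gpre Q P (i:ℕ) a' (Function.update b' i y)
              * Q i a' (Function.update b' i y) else 0)
        = (if (∀ j ∈ insert i SA, a' j = a j) ∧ (∀ j ∈ SB, b' j = b j)
           then Gpre Q P (i:ℕ) a' b' * Q i a' (Function.update b' i y) else 0) := by
      intro y
      have hcnd : ((∀ j ∈ insert i SA, a' j = a j) ∧ (∀ j ∈ SB, Function.update b' i y j = b j))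
          ↔ ((∀ j ∈ insert i SA, a' j = a j) ∧ (∀ j ∈ SB, b' j = b j)) :=
        and_congr Iff.rfl (forall₂_congr fun j hj => by
          rw [Function.update_of_ne (fun h : j = i => hiSB (h ▸ hj))])
      rw [if_congr hcnd rfl rfl, hGupdB]
    simp_rw [hrw]
    by_cases hc : (∀ j ∈ insert i SA, a' j = a j) ∧ (∀ j ∈ SB, b' j = b j)
    · simp only [eq_true hc, if_true]
      rw [← Finset.mul_sum, hQ.2.1, mul_one]
    · simp only [eq_false hc, if_false, Finset.sum_const_zero]
  have step3 : (Fintype.card A : ℝ) * Uins = U := by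
    rw [hUins, hU, Finset.sum_comm (f := fun a' b' =>
      (if (∀ j ∈ insert i SA, a' j = a j) ∧ (∀ j ∈ SB, b' j = b j)
       then Gpre Q P (i:ℕ) a' b' else 0)),
      Finset.sum_comm (f := fun a' b' =>
      (if (∀ j ∈ SA, a' j = a j) ∧ (∀ j ∈ SB, b' j = b j)
       then Gpre Q P (i:ℕ) a' b' else 0)),
      Finset.mul_sum]
    refine Finset.sum_congr rfl fun b' _ => ?_
    have hsplit : ∀ (a' : Fin (n+1) → A),
        (if (∀ j ∈ insert i SA, a' j = a j) ∧ (∀ j ∈ SB, b' j = b j)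
         then Gpre Q P (i:ℕ) a' b' else 0)
        = (if a' i = a i then
            (if (∀ j ∈ SA, a' j = a j) ∧ (∀ j ∈ SB, b' j = b j)
             then Gpre Q P (i:ℕ) a' b' else 0) else 0) := by
      intro a'
      by_cases h1 : a' i = a i
      · by_cases h2 : (∀ j ∈ SA, a' j = a j) ∧ (∀ j ∈ SB, b' j = b j)
        · rw [if_pos h1, if_pos h2,
            if_pos ⟨(Finset.forall_mem_insert i SA _).2 ⟨h1, h2.1⟩, h2.2⟩]
        · rw [if_pos h1, if_neg h2,
            if_neg (fun h => h2 ⟨fun j hj => h.1 j (Finset.mem_insert_of_mem hj), h.2⟩)]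
      · rw [if_neg h1, if_neg (fun h => h1 (h.1 i (Finset.mem_insert_self i SA)))]
    simp_rw [hsplit]
    refine sum_pin i (a i) _ (fun a' x => ?_)
    have hcnd : ((∀ j ∈ SA, Function.update a' i x j = a j) ∧ (∀ j ∈ SB, b' j = b j))
        ↔ ((∀ j ∈ SA, a' j = a j) ∧ (∀ j ∈ SB, b' j = b j)) :=
      and_congr (forall₂_congr fun j hj => by
        rw [Function.update_of_ne (fun h : j = i => hiSA (h ▸ hj))]) Iff.rfl
    rw [if_congr hcnd rfl rfl, hGupdA]
  -- identities from lemT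
  have E1 := lemT' hQ hP i (SA := insert i SA) (SB := SB)
    (fun j hj => by
      rcases Finset.mem_insert.1 hj with rfl | hj
      · exact le_refl _
      · exact hSA j hj)
    (fun j hj => le_of_lt (hSB j hj)) a b
  have E2 := lemT' hQ hP i (SA := SA) (SB := SB) hSA
    (fun j hj => le_of_lt (hSB j hj)) a b
  have EU := lemT hQ hP (n+1-(i:ℕ)) (by omega) SA SB a b
    (fun j hj => by have := hSAlt j hj; omega)
    (fun j hj => by have := hSB j hj; omega)
  rw [show n+1-(n+1-(i:ℕ)) = (i:ℕ) from by omega] at EU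
  rw [← hSinsA] at E1
  rw [← hSsb] at E2
  rw [← hU] at EU
  have hAne : (Fintype.card A : ℝ) ≠ 0 := Nat.cast_ne_zero.mpr Fintype.card_ne_zero
  have hBne : (Fintype.card B : ℝ) ≠ 0 := Nat.cast_ne_zero.mpr Fintype.card_ne_zero
  have hNne : ((Fintype.card A * Fintype.card B : ℕ) : ℝ)^(n-(i:ℕ)) ≠ 0 := by
    refine pow_ne_zero _ (Nat.cast_ne_zero.mpr ?_)
    exact Nat.mul_ne_zero Fintype.card_ne_zero Fintype.card_ne_zero
  have key2 : (Fintype.card A : ℝ) * ((Fintype.card B : ℝ) * Ssb) = U := by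
    rw [E2, EU, show n+1-(i:ℕ) = (n-(i:ℕ))+1 from by omega, pow_succ]
    push_cast
    ring
  have hSQ : SinsA = P i a b * Ssb := by
    refine mul_left_cancel₀ hAne (mul_left_cancel₀ hBne ?_)
    calc (Fintype.card B : ℝ) * ((Fintype.card A : ℝ) * SinsA)
        = P i a b * ((Fintype.card A : ℝ) * ((Fintype.card B : ℝ) * V)) := by
          rw [step1]; ring
      _ = P i a b * ((Fintype.card A : ℝ) * Uins) := by rw [step2]
      _ = P i a b * U := by rw [step3]
      _ = P i a b * ((Fintype.card A : ℝ) * ((Fintype.card B : ℝ) * Ssb)) := by rw [key2]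
      _ = (Fintype.card B : ℝ) * ((Fintype.card A : ℝ) * (P i a b * Ssb)) := by ring
  refine mul_left_cancel₀ hNne ?_
  rw [← E1, hSQ, E2]
  ring
lemma mass_one [Nonempty A] [Nonempty B] (hQ : IsChannel Q) (hP : IsInput P)
    (a : Fin (n+1) → A) (b : Fin (n+1) → B) :
    marg (joint Q P) ∅ ∅ a b = 1 := by
  classical
  have h := lemT hQ hP (n+1) (le_refl _) ∅ ∅ a b
    (fun j hj => absurd hj (Finset.notMem_empty j))
    (fun j hj => absurd hj (Finset.notMem_empty j))
  rw [Nat.sub_self] at h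
  have hLHS : (∑ a' : Fin (n+1) → A, ∑ b' : Fin (n+1) → B,
      (if (∀ j ∈ (∅ : Finset (Fin (n+1))), a' j = a j)
          ∧ (∀ j ∈ (∅ : Finset (Fin (n+1))), b' j = b j)
       then Gpre Q P 0 a' b' else 0))
      = ((Fintype.card A)^(n+1) * (Fintype.card B)^(n+1) : ℕ) := by
    have : ∀ (a' : Fin (n+1) → A) (b' : Fin (n+1) → B),
        (if (∀ j ∈ (∅ : Finset (Fin (n+1))), a' j = a j)
            ∧ (∀ j ∈ (∅ : Finset (Fin (n+1))), b' j = b j)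
         then Gpre Q P 0 a' b' else 0) = 1 := by
      intro a' b'
      rw [if_pos ⟨fun j hj => absurd hj (Finset.notMem_empty j),
        fun j hj => absurd hj (Finset.notMem_empty j)⟩, Gpre_zero]
    simp_rw [this]
    rw [Finset.sum_const, Finset.sum_const, Finset.card_univ, Finset.card_univ,
      Fintype.card_fun, Fintype.card_fun, Fintype.card_fin]
    push_cast
    ring
  rw [hLHS] at h
  have hNne : ((Fintype.card A * Fintype.card B : ℕ) : ℝ)^(n+1) ≠ 0 := by
    refine pow_ne_zero _ (Nat.cast_ne_zero.mpr ?_)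
    exact Nat.mul_ne_zero Fintype.card_ne_zero Fintype.card_ne_zero
  refine mul_left_cancel₀ hNne ?_
  rw [← h, mul_one]
  push_cast
  ring

lemma margB_empty [Nonempty A] [Nonempty B] (hQ : IsChannel Q) (hP : IsInput P)
    (b : Fin (n+1) → B) : margB (joint Q P) ∅ b = 1 := by
  have a : Fin (n+1) → A := fun _ => Classical.arbitrary A
  rw [← marg_empty_left (a := a)]
  exact mass_one hQ hP a b

/-! ### specializations to the window structure -/

variable {M : ℕ}

lemma factQwin [Nonempty A] [Nonempty B] (hQ : IsChannel Q) (hP : IsInput P)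
    (hQB : ∀ (i : Fin (n+1)) (a a' : Fin (n+1) → A) (b b' : Fin (n+1) → B),
      a i = a' i → (∀ j ∈ insert i (idxWin n i M), b j = b' j) → Q i a b = Q i a' b')
    {i : Fin (n+1)} {SB : Finset (Fin (n+1))} (hiSB : i ∉ SB)
    (hSB : ∀ j ∈ SB, (j:ℕ) < (i:ℕ)) (hWin : idxWin n i M ⊆ SB)
    (a : Fin (n+1) → A) (b : Fin (n+1) → B) :
    marg (joint Q P) {i} (insert i SB) a b
      = Q i a b * marg (joint Q P) {i} SB a b := by
  refine factQ hQ hP hiSB (fun j hj => by rw [Finset.mem_singleton.1 hj])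
    hSB (fun a' b' hA hB => ?_)
  refine hQB i a' a b' b (hA i (Finset.mem_singleton_self i)) (fun j hj => ?_)
  rcases Finset.mem_insert.1 hj with rfl | hj
  · exact hB j (Finset.mem_insert_self j SB)
  · exact hB j (Finset.mem_insert_of_mem (hWin hj))

lemma factPwin [Nonempty A] [Nonempty B] (hQ : IsChannel Q) (hP : IsInput P)
    (hPwin : ∀ (i : Fin (n+1)) (a a' : Fin (n+1) → A) (b b' : Fin (n+1) → B),
      a i = a' i → (∀ j ∈ idxWin n i M, b j = b' j) → P i a b = P i a' b')
    {i : Fin (n+1)} {SB : Finset (Fin (n+1))} (hiSB : i ∉ SB)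
    (hSB : ∀ j ∈ SB, (j:ℕ) < (i:ℕ)) (hWin : idxWin n i M ⊆ SB)
    (a : Fin (n+1) → A) (b : Fin (n+1) → B) :
    marg (joint Q P) {i} SB a b = P i a b * margB (joint Q P) SB b := by
  have h := factP hQ hP (i := i) (SA := ∅) (SB := SB)
    (Finset.notMem_empty i) hiSB
    (fun j hj => absurd hj (Finset.notMem_empty j)) hSB
    (fun a' b' hA hB => hPwin i a' a b' b
      (hA i (Finset.mem_insert_self i ∅))
      (fun j hj => hB j (hWin hj)))
    (a := a) (b := b)
  rw [marg_empty_left] at h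
  rw [show ({i} : Finset (Fin (n+1))) = insert i ∅ from rfl]
  exact h

lemma rstep [Nonempty A] [Nonempty B] (hQ : IsChannel Q) (hP : IsInput P)
    (hQB : ∀ (i : Fin (n+1)) (a a' : Fin (n+1) → A) (b b' : Fin (n+1) → B),
      a i = a' i → (∀ j ∈ insert i (idxWin n i M), b j = b' j) → Q i a b = Q i a' b')
    (hPwin : ∀ (i : Fin (n+1)) (a a' : Fin (n+1) → A) (b b' : Fin (n+1) → B),
      a i = a' i → (∀ j ∈ idxWin n i M, b j = b' j) → P i a b = P i a' b')
    {i : Fin (n+1)} {SB : Finset (Fin (n+1))} (hiSB : i ∉ SB)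
    (hSB : ∀ j ∈ SB, (j:ℕ) < (i:ℕ)) (hWin : idxWin n i M ⊆ SB)
    (a : Fin (n+1) → A) (b : Fin (n+1) → B) :
    margB (joint Q P) (insert i SB) b
      = (∑ x : A, Q i (Function.update a i x) b * P i (Function.update a i x) b)
        * margB (joint Q P) SB b := by
  have hchain := marg_chainA (μ := joint Q P) (SA := ∅) (SB := insert i SB)
    (a := a) (b := b) (Finset.notMem_empty i)
  rw [marg_empty_left] at hchain
  rw [← hchain, Finset.sum_mul]
  refine Finset.sum_congr rfl fun x _ => ?_
  rw [show (insert i ∅ : Finset (Fin (n+1))) = {i} from rfl]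
  rw [factQwin hQ hP hQB hiSB hSB hWin _ b,
    factPwin hQ hP hPwin hiSB hSB hWin _ b]
  ring
lemma joint_nonneg (hQ : IsChannel Q) (hP : IsInput P) :
    ∀ a b, 0 ≤ joint Q P a b :=
  fun a b => Finset.prod_nonneg fun j _ => mul_nonneg (hQ.1 j a b) (hP.1 j a b)

lemma cmi_win_eq [Nonempty A] [Nonempty B] (hQ : IsChannel Q) (hP : IsInput P)
    (hQB : ∀ (i : Fin (n+1)) (a a' : Fin (n+1) → A) (b b' : Fin (n+1) → B),
      a i = a' i → (∀ j ∈ insert i (idxWin n i M), b j = b' j) → Q i a b = Q i a' b')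
    (hPwin : ∀ (i : Fin (n+1)) (a a' : Fin (n+1) → A) (b b' : Fin (n+1) → B),
      a i = a' i → (∀ j ∈ idxWin n i M, b j = b' j) → P i a b = P i a' b')
    (i : Fin (n+1)) :
    cmi (joint Q P) (idxLe n i) i (idxLt n i) = cmi (joint Q P) {i} i (idxWin n i M) := by
  have hμnn : ∀ a b, 0 ≤ joint Q P a b := joint_nonneg hQ hP
  unfold cmi
  refine Finset.sum_congr rfl fun a _ => Finset.sum_congr rfl fun b _ => ?_
  by_cases h0 : joint Q P a b = 0
  · rw [h0, zero_mul, zero_mul]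
  · have hpos : 0 < joint Q P a b := lt_of_le_of_ne (hμnn a b) (Ne.symm h0)
    have hXpos : 0 < marg (joint Q P) (idxLe n i) (idxLt n i) a b :=
      lt_of_lt_of_le hpos (self_le_marg hμnn)
    have hW0 : 0 < margB (joint Q P) (idxLt n i) b :=
      lt_of_lt_of_le hXpos (marg_le_margB hμnn)
    have hU2 : 0 < marg (joint Q P) {i} (idxWin n i M) a b := by
      refine lt_of_lt_of_le hXpos (marg_mono hμnn ?_ idxWin_subset_idxLt)
      exact Finset.singleton_subset_iff.2 (mem_idxLe.2 (le_refl _))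
    have hV0 : 0 < margB (joint Q P) (idxWin n i M) b :=
      lt_of_lt_of_le hW0 (margB_mono hμnn idxWin_subset_idxLt)
    have hLe : 0 < margB (joint Q P) (idxLe n i) b := by
      refine lt_of_lt_of_le ?_ (marg_le_margB hμnn (SA := idxLe n i) (SB := idxLe n i) (a := a))
      exact lt_of_lt_of_le hpos (self_le_marg hμnn)
    have hF1 : marg (joint Q P) (idxLe n i) (idxLe n i) a b
        = Q i a b * marg (joint Q P) (idxLe n i) (idxLt n i) a b := by
      have h := factQ hQ hP (i := i) (SA := idxLe n i) (SB := idxLt n i) notMem_idxLt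
        (fun j hj => mem_idxLe.1 hj) (fun j hj => mem_idxLt.1 hj)
        (fun a' b' hA hB => hQ.2.2 i a' a b' b
          (fun k hk => hA k (mem_idxLe.2 hk))
          (fun k hk => hB k ((insert_idxLt i) ▸ mem_idxLe.2 hk)))
        (a := a) (b := b)
      rwa [insert_idxLt] at h
    have hF2 : marg (joint Q P) {i} (insert i (idxWin n i M)) a b
        = Q i a b * marg (joint Q P) {i} (idxWin n i M) a b :=
      factQwin hQ hP hQB notMem_idxWin (fun j hj => (mem_idxWin.1 hj).1)
        (Finset.Subset.refl _) a b
    have hr1 : margB (joint Q P) (idxLe n i) b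
        = (∑ x : A, Q i (Function.update a i x) b * P i (Function.update a i x) b)
          * margB (joint Q P) (idxLt n i) b := by
      have h := rstep hQ hP hQB hPwin (i := i) (SB := idxLt n i) notMem_idxLt
        (fun j hj => mem_idxLt.1 hj) idxWin_subset_idxLt a b
      rwa [insert_idxLt] at h
    have hr2 : margB (joint Q P) (insert i (idxWin n i M)) b
        = (∑ x : A, Q i (Function.update a i x) b * P i (Function.update a i x) b)
          * margB (joint Q P) (idxWin n i M) b :=
      rstep hQ hP hQB hPwin notMem_idxWin (fun j hj => (mem_idxWin.1 hj).1)
        (Finset.Subset.refl _) a b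
    have hrpos : 0 < ∑ x : A, Q i (Function.update a i x) b * P i (Function.update a i x) b := by
      have h := hLe
      rw [hr1] at h
      nlinarith [hW0]
    congr 1
    simp only [marg_empty_left]
    rw [insert_idxLt, hF1, hF2, hr1, hr2]
    congr 1
    rw [div_eq_div_iff (ne_of_gt (mul_pos hXpos (mul_pos hrpos hW0)))
      (ne_of_gt (mul_pos hU2 (mul_pos hrpos hV0)))]
    ring
lemma cmi_le_win [Nonempty A] [Nonempty B] (hQ : IsChannel Q) (hP : IsInput P)
    (hQB : ∀ (i : Fin (n+1)) (a a' : Fin (n+1) → A) (b b' : Fin (n+1) → B),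
      a i = a' i → (∀ j ∈ insert i (idxWin n i M), b j = b' j) → Q i a b = Q i a' b')
    (i : Fin (n+1)) :
    cmi (joint Q P) (idxLe n i) i (idxLt n i) ≤ cmi (joint Q P) {i} i (idxWin n i M) := by
  classical
  have hμnn : ∀ a b, 0 ≤ joint Q P a b := joint_nonneg hQ hP
  have hsub1 : idxLt n i ⊆ idxLe n i :=
    fun j hj => mem_idxLe.2 (le_of_lt (mem_idxLt.1 hj))
  have hsub2 : insert i (idxWin n i M) ⊆ idxLe n i := by
    intro j hj
    rcases Finset.mem_insert.1 hj with rfl | hj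
    · exact mem_idxLe.2 (le_refl _)
    · exact mem_idxLe.2 (le_of_lt (mem_idxWin.1 hj).1)
  have hsub3 : idxWin n i M ⊆ insert i (idxWin n i M) := Finset.subset_insert _ _
  set L : (Fin (n+1) → B) → ℝ := fun b =>
    Real.log (margB (joint Q P) (idxLe n i) b * margB (joint Q P) (idxWin n i M) b /
      (margB (joint Q P) (idxLt n i) b * margB (joint Q P) (insert i (idxWin n i M)) b))
    with hLdef
  have hdiff : cmi (joint Q P) {i} i (idxWin n i M) - cmi (joint Q P) (idxLe n i) i (idxLt n i)
      = ∑ a : Fin (n+1) → A, ∑ b : Fin (n+1) → B, joint Q P a b * L b := by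
    unfold cmi
    rw [← Finset.sum_sub_distrib]
    refine Finset.sum_congr rfl fun a _ => ?_
    rw [← Finset.sum_sub_distrib]
    refine Finset.sum_congr rfl fun b _ => ?_
    rw [← mul_sub]
    by_cases h0 : joint Q P a b = 0
    · rw [h0, zero_mul, zero_mul]
    · congr 1
      have hpos : 0 < joint Q P a b := lt_of_le_of_ne (hμnn a b) (Ne.symm h0)
      have hQpos : 0 < Q i a b := by
        have hne : Q i a b * P i a b ≠ 0 := by
          intro hzero
          exact h0 (Finset.prod_eq_zero (Finset.mem_univ i) hzero)
        exact lt_of_le_of_ne (hQ.1 i a b) (Ne.symm (fun h => hne (by rw [h, zero_mul])))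
      have hXpos : 0 < marg (joint Q P) (idxLe n i) (idxLt n i) a b :=
        lt_of_lt_of_le hpos (self_le_marg hμnn)
      have hW0 : 0 < margB (joint Q P) (idxLt n i) b :=
        lt_of_lt_of_le hXpos (marg_le_margB hμnn)
      have hW1 : 0 < margB (joint Q P) (idxLe n i) b := by
        refine lt_of_lt_of_le ?_ (marg_le_margB hμnn (SA := idxLe n i) (SB := idxLe n i) (a := a))
        exact lt_of_lt_of_le hpos (self_le_marg hμnn)
      have hU2 : 0 < marg (joint Q P) {i} (idxWin n i M) a b := by
        refine lt_of_lt_of_le hXpos (marg_mono hμnn ?_ idxWin_subset_idxLt)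
        exact Finset.singleton_subset_iff.2 (mem_idxLe.2 (le_refl _))
      have hV0 : 0 < margB (joint Q P) (idxWin n i M) b :=
        lt_of_lt_of_le hW0 (margB_mono hμnn idxWin_subset_idxLt)
      have hV1 : 0 < margB (joint Q P) (insert i (idxWin n i M)) b :=
        lt_of_lt_of_le hW1 (margB_mono hμnn hsub2)
      have hF1 : marg (joint Q P) (idxLe n i) (idxLe n i) a b
          = Q i a b * marg (joint Q P) (idxLe n i) (idxLt n i) a b := by
        have h := factQ hQ hP (i := i) (SA := idxLe n i) (SB := idxLt n i) notMem_idxLt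
          (fun j hj => mem_idxLe.1 hj) (fun j hj => mem_idxLt.1 hj)
          (fun a' b' hA hB => hQ.2.2 i a' a b' b
            (fun k hk => hA k (mem_idxLe.2 hk))
            (fun k hk => hB k ((insert_idxLt i) ▸ mem_idxLe.2 hk)))
          (a := a) (b := b)
        rwa [insert_idxLt] at h
      have hF2 : marg (joint Q P) {i} (insert i (idxWin n i M)) a b
          = Q i a b * marg (joint Q P) {i} (idxWin n i M) a b :=
        factQwin hQ hP hQB notMem_idxWin (fun j hj => (mem_idxWin.1 hj).1)
          (Finset.Subset.refl _) a b
      simp only [marg_empty_left, insert_idxLt]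
      rw [hF1, hF2, hLdef]
      simp only
      have e1 : Q i a b * marg (joint Q P) {i} (idxWin n i M) a b
            * margB (joint Q P) (idxWin n i M) b
            / (marg (joint Q P) {i} (idxWin n i M) a b
              * margB (joint Q P) (insert i (idxWin n i M)) b)
          = (Q i a b * marg (joint Q P) (idxLe n i) (idxLt n i) a b
              * margB (joint Q P) (idxLt n i) b
            / (marg (joint Q P) (idxLe n i) (idxLt n i) a b
              * margB (joint Q P) (idxLe n i) b))
            * (margB (joint Q P) (idxLe n i) b * margB (joint Q P) (idxWin n i M) b /
              (margB (joint Q P) (idxLt n i) b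
                * margB (joint Q P) (insert i (idxWin n i M)) b)) := by
        rw [div_mul_div_comm, div_eq_div_iff
          (ne_of_gt (mul_pos hU2 hV1))
          (ne_of_gt (mul_pos (mul_pos hXpos hW1) (mul_pos hW0 hV1)))]
        ring
      rw [e1, Real.log_mul
        (ne_of_gt (div_pos (mul_pos (mul_pos hQpos hXpos) hW0) (mul_pos hXpos hW1)))
        (ne_of_gt (div_pos (mul_pos hW1 hV0) (mul_pos hW0 hV1)))]
      ring
  have hLcong : ∀ b b', (∀ j ∈ idxLe n i, b j = b' j) → L b = L b' := by
    intro b b' h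
    rw [hLdef]
    simp only
    rw [margB_congr (SB := idxLe n i) h,
      margB_congr (SB := idxLt n i) (fun j hj => h j (hsub1 hj)),
      margB_congr (SB := idxWin n i M) (fun j hj => h j (hsub2 (hsub3 hj))),
      margB_congr (SB := insert i (idxWin n i M)) (fun j hj => h j (hsub2 hj))]
  have hagg := sum_margB_mul (joint Q P) (idxLe n i) L hLcong
  have hW0upd : ∀ (b : Fin (n+1) → B) (y : B),
      margB (joint Q P) (idxLt n i) (Function.update b i y)
        = margB (joint Q P) (idxLt n i) b :=
    fun b y => (margB_congr (fun j hj =>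
      (Function.update_of_ne (fun h : j = i => notMem_idxLt (h ▸ hj)) _ _).symm)).symm
  have hV0upd : ∀ (b : Fin (n+1) → B) (y : B),
      margB (joint Q P) (idxWin n i M) (Function.update b i y)
        = margB (joint Q P) (idxWin n i M) b :=
    fun b y => (margB_congr (fun j hj =>
      (Function.update_of_ne (fun h : j = i => notMem_idxWin (h ▸ hj)) _ _).symm)).symm
  have hchLe : ∀ b : Fin (n+1) → B,
      ∑ y : B, margB (joint Q P) (idxLe n i) (Function.update b i y)
        = margB (joint Q P) (idxLt n i) b := by
    intro b
    have h := margB_chain (μ := joint Q P) (b := b) (i := i) (SB := idxLt n i) notMem_idxLt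
    rwa [insert_idxLt] at h
  have hchWin : ∀ b : Fin (n+1) → B,
      ∑ y : B, margB (joint Q P) (insert i (idxWin n i M)) (Function.update b i y)
        = margB (joint Q P) (idxWin n i M) b :=
    fun b => margB_chain (μ := joint Q P) notMem_idxWin
  have hgibbs : 0 ≤ ∑ b : Fin (n+1) → B, margB (joint Q P) (idxLe n i) b * L b := by
    have hg := gibbs (fun b => margB (joint Q P) (idxLe n i) b)
      (fun b => margB (joint Q P) (idxLt n i) b
        * margB (joint Q P) (insert i (idxWin n i M)) b
        / margB (joint Q P) (idxWin n i M) b)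
      (fun b => margB_nonneg hμnn)
      (fun b => div_nonneg (mul_nonneg (margB_nonneg hμnn) (margB_nonneg hμnn))
        (margB_nonneg hμnn))
      (fun b hq => by
        rcases div_eq_zero_iff.1 hq with hnum | hden
        · rcases mul_eq_zero.1 hnum with h | h
          · exact le_antisymm (h ▸ margB_mono hμnn hsub1) (margB_nonneg hμnn)
          · exact le_antisymm (h ▸ margB_mono hμnn hsub2) (margB_nonneg hμnn)
        · have hV1z : margB (joint Q P) (insert i (idxWin n i M)) b = 0 :=
            le_antisymm (hden ▸ margB_mono hμnn hsub3) (margB_nonneg hμnn)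
          exact le_antisymm (hV1z ▸ margB_mono hμnn hsub2) (margB_nonneg hμnn))
      ?hs
    case hs =>
      have hcB : (0:ℝ) < (Fintype.card B : ℝ) := Nat.cast_pos.2 Fintype.card_pos
      refine le_of_mul_le_mul_left ?_ hcB
      have hp : (Fintype.card B : ℝ) * ∑ b : Fin (n+1) → B, margB (joint Q P) (idxLe n i) b
          = ∑ b : Fin (n+1) → B, margB (joint Q P) (idxLt n i) b := by
        rw [← sum_sum_update i (fun b => margB (joint Q P) (idxLe n i) b)]
        exact Finset.sum_congr rfl fun b _ => hchLe b
      have hqle : (Fintype.card B : ℝ) * ∑ b : Fin (n+1) → B,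
          (margB (joint Q P) (idxLt n i) b
            * margB (joint Q P) (insert i (idxWin n i M)) b
            / margB (joint Q P) (idxWin n i M) b)
          ≤ ∑ b : Fin (n+1) → B, margB (joint Q P) (idxLt n i) b := by
        rw [← sum_sum_update i (fun b => margB (joint Q P) (idxLt n i) b
          * margB (joint Q P) (insert i (idxWin n i M)) b
          / margB (joint Q P) (idxWin n i M) b)]
        refine Finset.sum_le_sum fun b _ => ?_
        have hrw : ∀ y : B, margB (joint Q P) (idxLt n i) (Function.update b i y)
              * margB (joint Q P) (insert i (idxWin n i M)) (Function.update b i y)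
              / margB (joint Q P) (idxWin n i M) (Function.update b i y)
            = margB (joint Q P) (idxLt n i) b
              * margB (joint Q P) (insert i (idxWin n i M)) (Function.update b i y)
              / margB (joint Q P) (idxWin n i M) b := by
          intro y
          rw [hW0upd, hV0upd]
        simp_rw [hrw, div_eq_mul_inv, mul_assoc, ← Finset.mul_sum, ← Finset.sum_mul, hchWin]
        by_cases hV : margB (joint Q P) (idxWin n i M) b = 0
        · rw [hV]
          simp [margB_nonneg hμnn]
        · rw [mul_inv_cancel₀ hV, mul_one]
      linarith [hp, hqle]
    refine le_trans hg (le_of_eq (Finset.sum_congr rfl fun b _ => ?_))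
    by_cases hz : margB (joint Q P) (idxLe n i) b = 0
    · rw [hz, zero_mul, zero_mul]
    · have hW1 : 0 < margB (joint Q P) (idxLe n i) b :=
        lt_of_le_of_ne (margB_nonneg hμnn) (Ne.symm hz)
      have hW0 : 0 < margB (joint Q P) (idxLt n i) b :=
        lt_of_lt_of_le hW1 (margB_mono hμnn hsub1)
      have hV1 : 0 < margB (joint Q P) (insert i (idxWin n i M)) b :=
        lt_of_lt_of_le hW1 (margB_mono hμnn hsub2)
      have hV0 : 0 < margB (joint Q P) (idxWin n i M) b :=
        lt_of_lt_of_le hV1 (margB_mono hμnn hsub3)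
      have hrat : margB (joint Q P) (idxLe n i) b
            / (margB (joint Q P) (idxLt n i) b
              * margB (joint Q P) (insert i (idxWin n i M)) b
              / margB (joint Q P) (idxWin n i M) b)
          = margB (joint Q P) (idxLe n i) b * margB (joint Q P) (idxWin n i M) b
            / (margB (joint Q P) (idxLt n i) b
              * margB (joint Q P) (insert i (idxWin n i M)) b) :=
        div_div_eq_mul_div _ _ _
      rw [hLdef]
      simp only
      rw [hrat]
  have hNB : (0:ℝ) < ((Fintype.card B ^ Fintype.card { j : Fin (n+1) // j ∉ idxLe n i } : ℕ) : ℝ) :=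
    Nat.cast_pos.2 (pow_pos Fintype.card_pos _)
  have hS : 0 ≤ ∑ a : Fin (n+1) → A, ∑ b : Fin (n+1) → B, joint Q P a b * L b := by
    rw [hagg] at hgibbs
    nlinarith [hgibbs, hNB]
  linarith [hdiff, hS]
/-! ### the induced window policy -/

noncomputable def indPol (Q P : Fin (n+1) → (Fin (n+1) → A) → (Fin (n+1) → B) → ℝ) (M : ℕ) :
    Fin (n+1) → (Fin (n+1) → A) → (Fin (n+1) → B) → ℝ :=
  fun i a b =>
    if 0 < margB (joint Q P) (idxWin n i M) b
    then marg (joint Q P) {i} (idxWin n i M) a b / margB (joint Q P) (idxWin n i M) b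
    else (Fintype.card A : ℝ)⁻¹

lemma indPol_congr {M : ℕ} {i : Fin (n+1)} {a a' : Fin (n+1) → A} {b b' : Fin (n+1) → B}
    (hA : a i = a' i) (hB : ∀ j ∈ idxWin n i M, b j = b' j) :
    indPol Q P M i a b = indPol Q P M i a' b' := by
  unfold indPol
  rw [margB_congr (μ := joint Q P) (SB := idxWin n i M) hB,
    marg_congr (μ := joint Q P) (SA := {i}) (SB := idxWin n i M)
      (fun j hj => by rw [Finset.mem_singleton.1 hj, hA]) hB]

lemma indPol_isInput [Nonempty A] (hQ : IsChannel Q) (hP : IsInput P) (M : ℕ) :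
    IsInput (indPol Q P M) := by
  have hμnn : ∀ a b, 0 ≤ joint Q P a b := joint_nonneg hQ hP
  refine ⟨fun i a b => ?_, fun i a b => ?_, fun i a a' b b' hA hB => ?_⟩
  · unfold indPol
    split
    · exact div_nonneg (marg_nonneg hμnn) (margB_nonneg hμnn)
    · exact inv_nonneg.2 (Nat.cast_nonneg _)
  · by_cases h : 0 < margB (joint Q P) (idxWin n i M) b
    · have hrw : ∀ x : A, indPol Q P M i (Function.update a i x) b
          = marg (joint Q P) {i} (idxWin n i M) (Function.update a i x) b
            / margB (joint Q P) (idxWin n i M) b := by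
        intro x
        unfold indPol
        rw [if_pos h]
      simp_rw [hrw]
      rw [← Finset.sum_div]
      have hch := marg_chainA (μ := joint Q P) (SA := ∅) (SB := idxWin n i M)
        (a := a) (b := b) (i := i) (Finset.notMem_empty i)
      rw [marg_empty_left] at hch
      rw [show (insert i ∅ : Finset (Fin (n+1))) = {i} from rfl] at hch
      rw [hch, div_self (ne_of_gt h)]
    · have hrw : ∀ x : A, indPol Q P M i (Function.update a i x) b
          = (Fintype.card A : ℝ)⁻¹ := by
        intro x
        unfold indPol
        rw [if_neg h]
      simp_rw [hrw]
      rw [Finset.sum_const, Finset.card_univ, nsmul_eq_mul]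
      exact mul_inv_cancel₀ (Nat.cast_ne_zero.mpr Fintype.card_ne_zero)
  · exact indPol_congr (hA i (le_refl _))
      (fun j hj => hB j (mem_idxWin.1 hj).1)

lemma indPol_win {M : ℕ} :
    ∀ (i : Fin (n+1)) (a a' : Fin (n+1) → A) (b b' : Fin (n+1) → B),
      a i = a' i → (∀ j ∈ idxWin n i M, b j = b' j) →
      indPol Q P M i a b = indPol Q P M i a' b' :=
  fun _ _ _ _ _ hA hB => indPol_congr hA hB

lemma indPol_spec (hQ : IsChannel Q) (hP : IsInput P) (M : ℕ) (i : Fin (n+1))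
    (a : Fin (n+1) → A) (b : Fin (n+1) → B) :
    marg (joint Q P) {i} (idxWin n i M) a b
      = indPol Q P M i a b * margB (joint Q P) (idxWin n i M) b := by
  have hμnn : ∀ a b, 0 ≤ joint Q P a b := joint_nonneg hQ hP
  unfold indPol
  by_cases h : 0 < margB (joint Q P) (idxWin n i M) b
  · rw [if_pos h, div_mul_cancel₀ _ (ne_of_gt h)]
  · have hz : margB (joint Q P) (idxWin n i M) b = 0 :=
      le_antisymm (not_lt.1 h) (margB_nonneg hμnn)
    have hz2 : marg (joint Q P) {i} (idxWin n i M) a b = 0 :=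
      le_antisymm (hz ▸ marg_le_margB hμnn) (marg_nonneg hμnn)
    rw [if_neg h, hz, hz2, mul_zero]

/-! ### MDP marginal matching -/

lemma idxWin_zero {M : ℕ} (h0 : 0 < n+1) : idxWin n ⟨0, h0⟩ M = ∅ := by
  ext j
  simp [mem_idxWin]

lemma idxWin_succ_subset {M k : ℕ} (hk : k < n) :
    idxWin n ⟨k+1, by omega⟩ M ⊆ insert (⟨k, by omega⟩ : Fin (n+1)) (idxWin n ⟨k, by omega⟩ M) := by
  intro j hj
  have h := mem_idxWin.1 hj
  simp only [Fin.val_mk] at h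
  rcases Nat.lt_or_ge (j:ℕ) k with hlt | hge
  · refine Finset.mem_insert_of_mem (mem_idxWin.2 ?_)
    simp only [Fin.val_mk]
    omega
  · have : (j:ℕ) = k := by omega
    exact Finset.mem_insert.2 (Or.inl (Fin.ext this))

lemma mdp_win [Nonempty A] [Nonempty B] (hQ : IsChannel Q) (hP : IsInput P) {M : ℕ}
    (hQB : ∀ (i : Fin (n+1)) (a a' : Fin (n+1) → A) (b b' : Fin (n+1) → B),
      a i = a' i → (∀ j ∈ insert i (idxWin n i M), b j = b' j) → Q i a b = Q i a' b') :
    ∀ (k : ℕ) (hk : k ≤ n) (b : Fin (n+1) → B),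
      margB (joint Q (indPol Q P M)) (idxWin n ⟨k, by omega⟩ M) b
        = margB (joint Q P) (idxWin n ⟨k, by omega⟩ M) b := by
  have hInd : IsInput (indPol Q P M) := indPol_isInput hQ hP M
  intro k
  induction k with
  | zero =>
    intro hk b
    rw [idxWin_zero, margB_empty hQ hInd b, margB_empty hQ hP b]
  | succ k ih =>
    intro hk b
    have hkn : k < n := by omega
    set i : Fin (n+1) := ⟨k, by omega⟩ with hidef
    have hiW : i ∉ idxWin n i M := notMem_idxWin
    have hWlt : ∀ j ∈ idxWin n i M, (j:ℕ) < (i:ℕ) := fun j hj => (mem_idxWin.1 hj).1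
    have a0 : Fin (n+1) → A := fun _ => Classical.arbitrary A
    have hT : ∀ b' : Fin (n+1) → B,
        margB (joint Q (indPol Q P M)) (insert i (idxWin n i M)) b'
          = margB (joint Q P) (insert i (idxWin n i M)) b' := by
      intro b'
      have hchain : ∀ (Pp : Fin (n+1) → (Fin (n+1) → A) → (Fin (n+1) → B) → ℝ),
          margB (joint Q Pp) (insert i (idxWin n i M)) b'
          = ∑ x : A, marg (joint Q Pp) {i} (insert i (idxWin n i M))
              (Function.update a0 i x) b' := by
        intro Pp
        have h := marg_chainA (μ := joint Q Pp) (SA := ∅) (SB := insert i (idxWin n i M))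
          (a := a0) (b := b') (i := i) (Finset.notMem_empty i)
        rw [marg_empty_left] at h
        rw [show (insert i ∅ : Finset (Fin (n+1))) = {i} from rfl] at h
        exact h.symm
      rw [hchain (indPol Q P M), hchain P]
      refine Finset.sum_congr rfl fun x _ => ?_
      rw [factQwin hQ hInd hQB hiW hWlt (Finset.Subset.refl _) _ b',
        factQwin hQ hP hQB hiW hWlt (Finset.Subset.refl _) _ b',
        factPwin hQ hInd (indPol_win (P := P)) hiW hWlt (Finset.Subset.refl _) _ b',
        indPol_spec hQ hP M i _ b',
        ih (by omega) b']
    exact margB_transfer (idxWin_succ_subset hkn) hT b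
lemma cmi_transfer [Nonempty A] [Nonempty B] (hQ : IsChannel Q) (hP : IsInput P) {M : ℕ}
    (hQB : ∀ (i : Fin (n+1)) (a a' : Fin (n+1) → A) (b b' : Fin (n+1) → B),
      a i = a' i → (∀ j ∈ insert i (idxWin n i M), b j = b' j) → Q i a b = Q i a' b')
    (i : Fin (n+1)) :
    cmi (joint Q (indPol Q P M)) {i} i (idxWin n i M)
      = cmi (joint Q P) {i} i (idxWin n i M) := by
  classical
  have hInd : IsInput (indPol Q P M) := indPol_isInput hQ hP M
  have hiW : i ∉ idxWin n i M := notMem_idxWin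
  have hWlt : ∀ j ∈ idxWin n i M, (j:ℕ) < (i:ℕ) := fun j hj => (mem_idxWin.1 hj).1
  have hwinEq : ∀ b, margB (joint Q (indPol Q P M)) (idxWin n i M) b
      = margB (joint Q P) (idxWin n i M) b := by
    intro b
    have h := mdp_win hQ hP hQB (i:ℕ) (by have := i.isLt; omega) b
    simpa using h
  have hE2 : ∀ a b, marg (joint Q (indPol Q P M)) {i} (idxWin n i M) a b
      = marg (joint Q P) {i} (idxWin n i M) a b := by
    intro a b
    rw [factPwin hQ hInd (indPol_win (P := P)) hiW hWlt (Finset.Subset.refl _) a b,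
      indPol_spec hQ hP M i a b, hwinEq]
  have hE1 : ∀ a b, marg (joint Q (indPol Q P M)) {i} (insert i (idxWin n i M)) a b
      = marg (joint Q P) {i} (insert i (idxWin n i M)) a b := by
    intro a b
    rw [factQwin hQ hInd hQB hiW hWlt (Finset.Subset.refl _) a b,
      factQwin hQ hP hQB hiW hWlt (Finset.Subset.refl _) a b, hE2]
  have hE3 : ∀ b, margB (joint Q (indPol Q P M)) (insert i (idxWin n i M)) b
      = margB (joint Q P) (insert i (idxWin n i M)) b := by
    intro b
    have a0 : Fin (n+1) → A := fun _ => Classical.arbitrary A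
    have hchain : ∀ (Pp : Fin (n+1) → (Fin (n+1) → A) → (Fin (n+1) → B) → ℝ),
        margB (joint Q Pp) (insert i (idxWin n i M)) b
        = ∑ x : A, marg (joint Q Pp) {i} (insert i (idxWin n i M))
            (Function.update a0 i x) b := by
      intro Pp
      have h := marg_chainA (μ := joint Q Pp) (SA := ∅) (SB := insert i (idxWin n i M))
        (a := a0) (b := b) (i := i) (Finset.notMem_empty i)
      rw [marg_empty_left] at h
      rw [show (insert i ∅ : Finset (Fin (n+1))) = {i} from rfl] at h
      exact h.symm
    rw [hchain (indPol Q P M), hchain P]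
    exact Finset.sum_congr rfl fun x _ => hE1 _ b
  set L : (Fin (n+1) → A) → (Fin (n+1) → B) → ℝ := fun a b =>
    Real.log (marg (joint Q P) {i} (insert i (idxWin n i M)) a b
        * margB (joint Q P) (idxWin n i M) b /
      (marg (joint Q P) {i} (idxWin n i M) a b
        * margB (joint Q P) (insert i (idxWin n i M)) b)) with hLdef
  have hLcong : ∀ a a' b b', (∀ j ∈ ({i} : Finset (Fin (n+1))), a j = a' j) →
      (∀ j ∈ insert i (idxWin n i M), b j = b' j) → L a b = L a' b' := by
    intro a a' b b' hA hB
    rw [hLdef]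
    simp only
    rw [marg_congr (SA := {i}) (SB := insert i (idxWin n i M)) hA hB,
      marg_congr (SA := {i}) (SB := idxWin n i M) hA
        (fun j hj => hB j (Finset.subset_insert _ _ hj)),
      margB_congr (SB := idxWin n i M) (fun j hj => hB j (Finset.subset_insert _ _ hj)),
      margB_congr (SB := insert i (idxWin n i M)) hB]
  have hcmiν : cmi (joint Q (indPol Q P M)) {i} i (idxWin n i M)
      = ∑ a : Fin (n+1) → A, ∑ b : Fin (n+1) → B, joint Q (indPol Q P M) a b * L a b := by
    unfold cmi
    refine Finset.sum_congr rfl fun a _ => Finset.sum_congr rfl fun b _ => ?_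
    rw [hLdef]
    simp only
    congr 1
    simp only [marg_empty_left]
    rw [hE1 a b, hE2 a b, hE3 b, hwinEq b]
  have hcmiμ : cmi (joint Q P) {i} i (idxWin n i M)
      = ∑ a : Fin (n+1) → A, ∑ b : Fin (n+1) → B, joint Q P a b * L a b := by
    unfold cmi
    refine Finset.sum_congr rfl fun a _ => Finset.sum_congr rfl fun b _ => ?_
    rw [hLdef]
    simp only
    congr 1
    simp only [marg_empty_left]
  have h1 := sum_marg_mul (joint Q (indPol Q P M)) {i} (insert i (idxWin n i M)) L hLcong
  have h2 := sum_marg_mul (joint Q P) {i} (insert i (idxWin n i M)) L hLcong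
  simp_rw [hE1] at h1
  have hNne : ((Fintype.card A ^ Fintype.card { j : Fin (n+1) // j ∉ ({i} : Finset (Fin (n+1))) } : ℕ) : ℝ)
      * ((Fintype.card B ^ Fintype.card { j : Fin (n+1) // j ∉ insert i (idxWin n i M) } : ℕ) : ℝ) ≠ 0 := by
    refine mul_ne_zero ?_ ?_ <;>
      exact Nat.cast_ne_zero.mpr (pow_ne_zero _ Fintype.card_ne_zero)
  rw [hcmiν, hcmiμ]
  exact mul_left_cancel₀ hNne (h1.symm.trans h2)

lemma DI_le_indPol [Nonempty A] [Nonempty B] (hQ : IsChannel Q) (hP : IsInput P) {M : ℕ}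
    (hQB : ∀ (i : Fin (n+1)) (a a' : Fin (n+1) → A) (b b' : Fin (n+1) → B),
      a i = a' i → (∀ j ∈ insert i (idxWin n i M), b j = b' j) → Q i a b = Q i a' b') :
    DI (joint Q P) ≤ DI (joint Q (indPol Q P M)) := by
  have hInd : IsInput (indPol Q P M) := indPol_isInput hQ hP M
  unfold DI
  calc ∑ i : Fin (n+1), cmi (joint Q P) (idxLe n i) i (idxLt n i)
      ≤ ∑ i : Fin (n+1), cmi (joint Q P) {i} i (idxWin n i M) :=
        Finset.sum_le_sum fun i _ => cmi_le_win hQ hP hQB i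
    _ = ∑ i : Fin (n+1), cmi (joint Q (indPol Q P M)) {i} i (idxWin n i M) :=
        Finset.sum_congr rfl fun i _ => (cmi_transfer hQ hP hQB i).symm
    _ = ∑ i : Fin (n+1), cmi (joint Q (indPol Q P M)) (idxLe n i) i (idxLt n i) :=
        Finset.sum_congr rfl fun i _ =>
          (cmi_win_eq hQ hInd hQB (indPol_win (P := P)) i).symm
end Stmt5Aux

open Stmt5Aux in
/-- for a Class B channel with memory `M`, the supremum of directed
information over all feedback input kernels equals the supremum over kernels of the
form `π_i^M(a_i | b_{i-M}^{i-1})`, and for such restricted inputs directed information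
equals `∑_i I(A_i; B_i | B_{i-M}^{i-1})`. -/
theorem stmt5 (M : ℕ) (Q : Fin (n+1) → (Fin (n+1) → A) → (Fin (n+1) → B) → ℝ)
    (hQ : IsChannel Q)
    (hQB : ∀ (i : Fin (n+1)) (a a' : Fin (n+1) → A) (b b' : Fin (n+1) → B),
      a i = a' i → (∀ j ∈ insert i (idxWin n i M), b j = b' j) → Q i a b = Q i a' b') :
    sSup {x : ℝ | ∃ P : Fin (n+1) → (Fin (n+1) → A) → (Fin (n+1) → B) → ℝ,
        IsInput P ∧ x = DI (joint Q P)}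
      = sSup {x : ℝ | ∃ P : Fin (n+1) → (Fin (n+1) → A) → (Fin (n+1) → B) → ℝ,
          IsInput P ∧
          (∀ (i : Fin (n+1)) (a a' : Fin (n+1) → A) (b b' : Fin (n+1) → B),
            a i = a' i → (∀ j ∈ idxWin n i M, b j = b' j) → P i a b = P i a' b') ∧
          x = DI (joint Q P)}
    ∧ ∀ P : Fin (n+1) → (Fin (n+1) → A) → (Fin (n+1) → B) → ℝ,
        IsInput P →
        (∀ (i : Fin (n+1)) (a a' : Fin (n+1) → A) (b b' : Fin (n+1) → B),
          a i = a' i → (∀ j ∈ idxWin n i M, b j = b' j) → P i a b = P i a' b') →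
        DI (joint Q P) = ∑ i : Fin (n+1), cmi (joint Q P) {i} i (idxWin n i M) := by
  classical
  have hsets_eq_of_emptyA : ∀ (h : IsEmpty A),
      {x : ℝ | ∃ P : Fin (n+1) → (Fin (n+1) → A) → (Fin (n+1) → B) → ℝ,
        IsInput P ∧ x = DI (joint Q P)}
      = {x : ℝ | ∃ P : Fin (n+1) → (Fin (n+1) → A) → (Fin (n+1) → B) → ℝ,
          IsInput P ∧
          (∀ (i : Fin (n+1)) (a a' : Fin (n+1) → A) (b b' : Fin (n+1) → B),
            a i = a' i → (∀ j ∈ idxWin n i M, b j = b' j) → P i a b = P i a' b') ∧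
          x = DI (joint Q P)} := by
    intro h
    ext x
    constructor
    · rintro ⟨P, h1, h2⟩
      exact ⟨P, h1, fun i a a' b b' _ _ => (h.false (a 0)).elim, h2⟩
    · rintro ⟨P, h1, _, h2⟩
      exact ⟨P, h1, h2⟩
  have hsets_eq_of_emptyB : ∀ (h : IsEmpty B),
      {x : ℝ | ∃ P : Fin (n+1) → (Fin (n+1) → A) → (Fin (n+1) → B) → ℝ,
        IsInput P ∧ x = DI (joint Q P)}
      = {x : ℝ | ∃ P : Fin (n+1) → (Fin (n+1) → A) → (Fin (n+1) → B) → ℝ,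
          IsInput P ∧
          (∀ (i : Fin (n+1)) (a a' : Fin (n+1) → A) (b b' : Fin (n+1) → B),
            a i = a' i → (∀ j ∈ idxWin n i M, b j = b' j) → P i a b = P i a' b') ∧
          x = DI (joint Q P)} := by
    intro h
    ext x
    constructor
    · rintro ⟨P, h1, h2⟩
      exact ⟨P, h1, fun i a a' b b' _ _ => (h.false (b 0)).elim, h2⟩
    · rintro ⟨P, h1, _, h2⟩
      exact ⟨P, h1, h2⟩
  constructor
  · -- sSup equality
    rcases isEmpty_or_nonempty A with hA | hA
    · rw [hsets_eq_of_emptyA hA]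
    rcases isEmpty_or_nonempty B with hB | hB
    · rw [hsets_eq_of_emptyB hB]
    -- main case
    set F := {x : ℝ | ∃ P : Fin (n+1) → (Fin (n+1) → A) → (Fin (n+1) → B) → ℝ,
        IsInput P ∧ x = DI (joint Q P)} with hFdef
    set R := {x : ℝ | ∃ P : Fin (n+1) → (Fin (n+1) → A) → (Fin (n+1) → B) → ℝ,
        IsInput P ∧
        (∀ (i : Fin (n+1)) (a a' : Fin (n+1) → A) (b b' : Fin (n+1) → B),
          a i = a' i → (∀ j ∈ idxWin n i M, b j = b' j) → P i a b = P i a' b') ∧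
        x = DI (joint Q P)} with hRdef
    have hRF : R ⊆ F := by
      rintro x ⟨P, h1, _, h2⟩
      exact ⟨P, h1, h2⟩
    have hdom : ∀ x ∈ F, ∃ y ∈ R, x ≤ y := by
      rintro x ⟨P, hP, rfl⟩
      exact ⟨DI (joint Q (indPol Q P M)),
        ⟨indPol Q P M, indPol_isInput hQ hP M, indPol_win (P := P), rfl⟩,
        DI_le_indPol hQ hP hQB⟩
    have hPu : IsInput (fun (_ : Fin (n+1)) (_ : Fin (n+1) → A) (_ : Fin (n+1) → B) =>
        (Fintype.card A : ℝ)⁻¹) := by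
      refine ⟨fun _ _ _ => inv_nonneg.2 (Nat.cast_nonneg _), fun i a b => ?_,
        fun _ _ _ _ _ _ _ => rfl⟩
      rw [Finset.sum_const, Finset.card_univ, nsmul_eq_mul]
      exact mul_inv_cancel₀ (Nat.cast_ne_zero.mpr Fintype.card_ne_zero)
    have hRne : R.Nonempty := by
      refine ⟨DI (joint Q (fun _ _ _ => (Fintype.card A : ℝ)⁻¹)),
        ⟨_, hPu, fun _ _ _ _ _ _ _ => rfl, rfl⟩⟩
    have hFne : F.Nonempty := ⟨_, hRF hRne.choose_spec⟩
    by_cases hbdd : BddAbove R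
    · have hFbdd : BddAbove F := by
        obtain ⟨u, hu⟩ := hbdd
        refine ⟨u, fun x hx => ?_⟩
        obtain ⟨y, hyR, hxy⟩ := hdom x hx
        exact le_trans hxy (hu hyR)
      refine le_antisymm ?_ (csSup_le_csSup hFbdd hRne hRF)
      refine csSup_le hFne fun x hx => ?_
      obtain ⟨y, hyR, hxy⟩ := hdom x hx
      exact le_trans hxy (le_csSup hbdd hyR)
    · have hFbdd : ¬ BddAbove F := fun h => hbdd (h.mono hRF)
      rw [Real.sSup_of_not_bddAbove hFbdd, Real.sSup_of_not_bddAbove hbdd]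
  · -- part 2
    intro P hP hPwin
    rcases isEmpty_or_nonempty A with hA | hA
    · haveI : IsEmpty (Fin (n+1) → A) := ⟨fun f => hA.false (f 0)⟩
      simp [DI, cmi]
    rcases isEmpty_or_nonempty B with hB | hB
    · haveI : IsEmpty (Fin (n+1) → B) := ⟨fun f => hB.false (f 0)⟩
      simp [DI, cmi]
    unfold DI
    exact Finset.sum_congr rfl fun i _ => cmi_win_eq hQ hP hQB hPwin i
end

section
/- For a memoryless channel Q_i(b_i | b^{i-1}, a^i) = Q_i(b_i | a_i) on finite alphabets, the supremum of directed information I(A^n → B^n) over all feedback input kernels P_i(a_i | a^{i-1}, b^{i-1}) equals the supremum over memoryless input distributions π_i(a_i), i=0,...,n, of ∑_{i=0}^n I(A_i; B_i), where I(A_i;B_i) is the mutual information for the single-letter joint pmf Q_i(b_i|a_i) π_i(a_i). -/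
open Finset

variable {n : ℕ} {A B : Type} [Fintype A] [Fintype B] [DecidableEq A] [DecidableEq B]

/-!
For a memoryless channel the chain rule gives `p(a^i, b^i) = Q_i(b_i | a_i) p(a^i, b^{i-1})`
and `p(a_i, b_i) = Q_i(b_i | a_i) p(a_i)`, hence
`I(A_i; B_i) - I(A^i; B_i | B^{i-1}) = I(B_i; B^{i-1}) ≥ 0`, with equality for a memoryless
input, under which the outputs are independent. So the directed information of any feedback
input is at most `∑_i I(A_i; B_i)`. This sum only depends on the laws of the pairs `(A_i, B_i)`,
i.e. on `Q_i` and the input marginals `π_i`, and the memoryless input with marginals `π_i` attains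
it. Every value of the first set is therefore dominated by a value of the second, which is
contained in the first, and the two suprema agree.
-/

open Function Real

section Information

variable {Ω α β : Type*} [Fintype Ω] [DecidableEq α] [DecidableEq β]

def law (μ : Ω → ℝ) (X : Ω → α) (x : α) : ℝ :=
  ∑ ω, if X ω = x then μ ω else 0

lemma law_nonneg {μ : Ω → ℝ} (hμ : ∀ ω, 0 ≤ μ ω) (X : Ω → α) (x : α) :
    0 ≤ law μ X x :=
  sum_nonneg fun ω _ => by split_ifs <;> simp [hμ]

lemma sum_mul_comp_eq_sum_law [Fintype α] (μ : Ω → ℝ) (X : Ω → α) (g : α → ℝ) :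
    ∑ ω, μ ω * g (X ω) = ∑ x, law μ X x * g x := by
  simp only [law, sum_mul, ite_mul, zero_mul]
  rw [sum_comm]
  simp

lemma sum_law [Fintype α] (μ : Ω → ℝ) (X : Ω → α) :
    ∑ x, law μ X x = ∑ ω, μ ω := by
  simpa using (sum_mul_comp_eq_sum_law μ X fun _ => 1).symm

lemma law_fst_eq_sum [Fintype β] (μ : Ω → ℝ) (X : Ω → α) (Y : Ω → β) (x : α) :
    law μ X x = ∑ y, law μ (fun ω => (X ω, Y ω)) (x, y) := by
  simp only [law, Prod.mk.injEq, ite_and]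
  rw [sum_comm]
  simp

lemma law_snd_eq_sum [Fintype α] (μ : Ω → ℝ) (X : Ω → α) (Y : Ω → β) (y : β) :
    law μ Y y = ∑ x, law μ (fun ω => (X ω, Y ω)) (x, y) := by
  simp only [law, Prod.mk.injEq, ite_and]
  rw [sum_comm]
  refine sum_congr rfl fun ω _ => ?_
  split_ifs <;> simp

lemma sum_sub_le_sum_mul_log_div {ι : Type*} [Fintype ι] {p q : ι → ℝ}
    (hp : ∀ i, 0 ≤ p i) (hq : ∀ i, 0 ≤ q i) (hpq : ∀ i, 0 < p i → 0 < q i) :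
    ∑ i, (p i - q i) ≤ ∑ i, p i * log (p i / q i) := by
  refine sum_le_sum fun i _ => ?_
  rcases (hp i).eq_or_lt with h | h
  · simp [← h, hq i]
  · have := one_sub_inv_le_log_of_pos (div_pos h (hpq i h))
    rw [inv_div] at this
    have key := mul_le_mul_of_nonneg_left this h.le
    rwa [mul_sub, mul_one, mul_div_cancel₀ _ h.ne'] at key

lemma mutualInfo_nonneg [Fintype α] [Fintype β] {μ : Ω → ℝ} (hμ : ∀ ω, 0 ≤ μ ω)
    (hμ1 : ∑ ω, μ ω ≤ 1) (X : Ω → α) (Y : Ω → β) :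
    0 ≤ ∑ ω, μ ω * log (law μ (fun ω => (X ω, Y ω)) (X ω, Y ω) /
      (law μ X (X ω) * law μ Y (Y ω))) := by
  set p := law μ (fun ω => (X ω, Y ω))
  have hp : ∀ z, 0 ≤ p z := law_nonneg hμ _
  have hpX : ∀ z : α × β, p z ≤ law μ X z.1 := fun z => by
    rw [law_fst_eq_sum μ X Y]
    exact single_le_sum (fun y _ => hp (z.1, y)) (mem_univ z.2)
  have hpY : ∀ z : α × β, p z ≤ law μ Y z.2 := fun z => by
    rw [law_snd_eq_sum μ X Y]
    exact single_le_sum (fun x _ => hp (x, z.2)) (mem_univ z.1)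
  have hsum : ∑ z : α × β, (p z - law μ X z.1 * law μ Y z.2)
      = (∑ ω, μ ω) - (∑ ω, μ ω) * ∑ ω, μ ω := by
    rw [sum_sub_distrib, sum_law, Fintype.sum_prod_type, ← sum_mul_sum, sum_law, sum_law]
  rw [sum_mul_comp_eq_sum_law μ (fun ω => (X ω, Y ω))
    (fun z => log (p z / (law μ X z.1 * law μ Y z.2)))]
  -- Gibbs against the product of the marginals, whose mass `(∑ μ)²` is at most `∑ μ`.
  refine le_trans ?_ (sum_sub_le_sum_mul_log_div hp
    (fun z => mul_nonneg (law_nonneg hμ X _) (law_nonneg hμ Y _))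
    (fun z hz => mul_pos (hz.trans_le (hpX z)) (hz.trans_le (hpY z))))
  rw [hsum]
  nlinarith [sum_nonneg fun ω (_ : ω ∈ univ) => hμ ω]

end Information

section Agreement

variable {X : Type} [Fintype X] [DecidableEq X]

lemma sum_filter_agree_indicator {S T : Finset (Fin (n+1))} (hST : S ⊆ T)
    (a a' : Fin (n+1) → X) :
    ∑ a'' : Fin (n+1) → X with (∀ j ∉ T \ S, a'' j = a j),
        (if ∀ j ∈ T, a' j = a'' j then (1 : ℝ) else 0)
      = if ∀ j ∈ S, a' j = a j then 1 else 0 := by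
  split_ifs with h
  · rw [sum_eq_single_of_mem (fun j => if j ∈ T then a' j else a j)]
    · simp +contextual
    · simp only [mem_filter, mem_univ, true_and, mem_sdiff, not_and, not_not]
      intro j hj
      split_ifs with hjT
      · exact h j (hj hjT)
      · rfl
    · intro a'' ha'' hne
      refine if_neg fun hagree => hne (funext fun j => ?_)
      simp only [mem_filter, mem_univ, true_and, mem_sdiff] at ha''
      split_ifs with hjT
      · exact (hagree j hjT).symm
      · exact ha'' j fun hj => hjT hj.1
  · refine sum_eq_zero fun a'' ha'' => if_neg fun hagree => h fun j hj => ?_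
    simp only [mem_filter, mem_univ, true_and, mem_sdiff] at ha''
    rw [hagree j (hST hj)]
    exact ha'' j fun hj' => hj'.2 hj

lemma sum_filter_agree_off_singleton (k : Fin (n+1)) (a : Fin (n+1) → X)
    (f : (Fin (n+1) → X) → ℝ) :
    ∑ a'' with (∀ j ∉ ({k} : Finset (Fin (n+1))), a'' j = a j), f a''
      = ∑ x, f (update a k x) := by
  rw [← sum_image (g := update a k) fun x _ y _ h => by simpa using congrFun h k]
  congr 1
  ext a''
  simp only [mem_filter, mem_univ, true_and, mem_singleton, mem_image, update_eq_iff]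
  exact ⟨fun h => ⟨a'' k, rfl, fun j hj => (h j hj).symm⟩,
    fun ⟨_, _, h⟩ j hj => (h j hj).symm⟩

lemma sum_filter_agree_off_empty (a : Fin (n+1) → X) (f : (Fin (n+1) → X) → ℝ) :
    ∑ a'' with (∀ j ∉ (∅ : Finset (Fin (n+1))), a'' j = a j), f a'' = f a := by
  simp [← funext_iff, filter_eq']

lemma filter_agree_eq_piFinset (S : Finset (Fin (n+1))) (c : Fin (n+1) → X) :
    univ.filter (fun c' => ∀ j ∈ S, c' j = c j)
      = Fintype.piFinset fun j => if j ∈ S then {c j} else univ := by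
  ext c'
  simp only [mem_filter, mem_univ, true_and, Fintype.mem_piFinset]
  refine forall_congr' fun j => ?_
  split_ifs with hj <;> simp [hj]

end Agreement

section Marginals

variable (μ ν : (Fin (n+1) → A) → (Fin (n+1) → B) → ℝ)

lemma marg_nonneg {μ} (hμ : ∀ a b, 0 ≤ μ a b) (SA SB : Finset (Fin (n+1)))
    (a : Fin (n+1) → A) (b : Fin (n+1) → B) : 0 ≤ marg μ SA SB a b :=
  sum_nonneg fun _ _ => sum_nonneg fun _ _ => by split_ifs <;> simp [hμ]

lemma le_marg {μ} (hμ : ∀ a b, 0 ≤ μ a b) (SA SB : Finset (Fin (n+1)))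
    (a : Fin (n+1) → A) (b : Fin (n+1) → B) : μ a b ≤ marg μ SA SB a b := by
  have hterm : ∀ a' b', 0 ≤ if (∀ j ∈ SA, a' j = a j) ∧ (∀ j ∈ SB, b' j = b j)
      then μ a' b' else 0 := fun a' b' => by split_ifs <;> simp [hμ]
  calc μ a b = if (∀ j ∈ SA, a j = a j) ∧ (∀ j ∈ SB, b j = b j) then μ a b else 0 := by
        simp
    _ ≤ ∑ b', if (∀ j ∈ SA, a j = a j) ∧ (∀ j ∈ SB, b' j = b j) then μ a b' else 0 :=
      single_le_sum (fun b' _ => hterm a b') (mem_univ b)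
    _ ≤ marg μ SA SB a b :=
      single_le_sum (f := fun a' => ∑ b', _)
        (fun a' _ => sum_nonneg fun b' _ => hterm a' b') (mem_univ a)

lemma marg_congr {SA SB : Finset (Fin (n+1))} {a a' : Fin (n+1) → A} {b b' : Fin (n+1) → B}
    (ha : ∀ j ∈ SA, a j = a' j) (hb : ∀ j ∈ SB, b j = b' j) :
    marg μ SA SB a b = marg μ SA SB a' b' := by
  unfold marg
  refine sum_congr rfl fun x _ => sum_congr rfl fun y _ => ?_
  congr 1
  exact propext <| and_congr (forall₂_congr fun j hj => by rw [ha j hj])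
    (forall₂_congr fun j hj => by rw [hb j hj])

lemma marg_univ_univ (a : Fin (n+1) → A) (b : Fin (n+1) → B) :
    marg μ univ univ a b = μ a b := by
  simp [marg, ← funext_iff, ite_and]

/-- A marginal is the sum of a finer one over the forgotten coordinates; those outside `TA`, `TB`
stay pinned so that no cell of the finer partition is counted twice. -/
lemma marg_eq_sum_marg {SA SB TA TB : Finset (Fin (n+1))} (hA : SA ⊆ TA) (hB : SB ⊆ TB)
    (a : Fin (n+1) → A) (b : Fin (n+1) → B) :
    marg μ SA SB a b = ∑ a'' with (∀ j ∉ TA \ SA, a'' j = a j),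
      ∑ b'' with (∀ j ∉ TB \ SB, b'' j = b j), marg μ TA TB a'' b'' := by
  set F := univ.filter fun a'' : Fin (n+1) → A => ∀ j ∉ TA \ SA, a'' j = a j
  set G := univ.filter fun b'' : Fin (n+1) → B => ∀ j ∉ TB \ SB, b'' j = b j
  set f := fun (a' a'' : Fin (n+1) → A) => if ∀ j ∈ TA, a' j = a'' j then (1 : ℝ) else 0
  set g := fun (b' b'' : Fin (n+1) → B) => if ∀ j ∈ TB, b' j = b'' j then (1 : ℝ) else 0
  calc marg μ SA SB a b
      = ∑ p : (Fin (n+1) → A) × (Fin (n+1) → B),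
          (∑ a'' ∈ F, f p.1 a'') * (∑ b'' ∈ G, g p.2 b'') * μ p.1 p.2 := by
        simp only [F, G, f, g, sum_filter_agree_indicator hA, sum_filter_agree_indicator hB, marg,
          Fintype.sum_prod_type, ite_and, ite_mul, one_mul, zero_mul]
    _ = ∑ a'' ∈ F, ∑ b'' ∈ G, ∑ p : (Fin (n+1) → A) × (Fin (n+1) → B),
          f p.1 a'' * g p.2 b'' * μ p.1 p.2 := by
        simp only [sum_mul, mul_sum]
        rw [sum_comm]
        exact (sum_congr rfl fun _ _ => sum_comm).trans sum_comm
    _ = _ := by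
        simp only [f, g, marg, Fintype.sum_prod_type, ite_and, ite_mul, one_mul, zero_mul]

lemma marg_congr_of_subset {TA TB SA SB : Finset (Fin (n+1))}
    (h : ∀ a b, marg μ TA TB a b = marg ν TA TB a b) (hA : SA ⊆ TA) (hB : SB ⊆ TB)
    (a : Fin (n+1) → A) (b : Fin (n+1) → B) : marg μ SA SB a b = marg ν SA SB a b := by
  simp only [marg_eq_sum_marg _ hA hB, h]

lemma marg_split_fst {k : Fin (n+1)} {SA : Finset (Fin (n+1))} (hk : k ∉ SA)
    (SB : Finset (Fin (n+1))) (a : Fin (n+1) → A) (b : Fin (n+1) → B) :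
    marg μ SA SB a b = ∑ x, marg μ (insert k SA) SB (update a k x) b := by
  rw [marg_eq_sum_marg μ (subset_insert k SA) (subset_refl SB), Finset.sdiff_self,
    insert_sdiff_of_notMem _ hk, Finset.sdiff_self, insert_empty_eq, sum_filter_agree_off_singleton]
  simp only [sum_filter_agree_off_empty]

lemma marg_split_snd {k : Fin (n+1)} {SB : Finset (Fin (n+1))} (hk : k ∉ SB)
    (SA : Finset (Fin (n+1))) (a : Fin (n+1) → A) (b : Fin (n+1) → B) :
    marg μ SA SB a b = ∑ y, marg μ SA (insert k SB) a (update b k y) := by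
  rw [marg_eq_sum_marg μ (subset_refl SA) (subset_insert k SB), Finset.sdiff_self,
    insert_sdiff_of_notMem _ hk, Finset.sdiff_self, insert_empty_eq, sum_filter_agree_off_empty,
    sum_filter_agree_off_singleton]

lemma marg_eq_law {γ : Type} [DecidableEq γ] (Z : (Fin (n+1) → A) × (Fin (n+1) → B) → γ)
    {SA SB : Finset (Fin (n+1))} {a : Fin (n+1) → A} {b : Fin (n+1) → B}
    (hZ : ∀ a' b', Z (a', b') = Z (a, b) ↔
      (∀ j ∈ SA, a' j = a j) ∧ ∀ j ∈ SB, b' j = b j) :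
    marg μ SA SB a b = law (uncurry μ) Z (Z (a, b)) := by
  simp only [marg, law, Fintype.sum_prod_type, uncurry_apply_pair, hZ]

/-- The mutual information `I(B_i; B_S)` is nonnegative. -/
lemma sum_mul_log_marg_nonneg {μ : (Fin (n+1) → A) → (Fin (n+1) → B) → ℝ}
    (hμ : ∀ a b, 0 ≤ μ a b) (hμ1 : ∑ a, ∑ b, μ a b ≤ 1) (i : Fin (n+1))
    (S : Finset (Fin (n+1))) :
    0 ≤ ∑ a, ∑ b, μ a b *
      log (marg μ ∅ (insert i S) a b / (marg μ ∅ {i} a b * marg μ ∅ S a b)) := by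
  have h := mutualInfo_nonneg (μ := uncurry μ) (fun ω => hμ ω.1 ω.2)
    (by rwa [Fintype.sum_prod_type]) (fun ω => ω.2 i) (fun ω => S.restrict ω.2)
  rw [Fintype.sum_prod_type] at h
  convert h using 5 with a _ b _
  · rfl
  rw [marg_eq_law μ (fun ω => (ω.2 i, S.restrict ω.2)),
    marg_eq_law μ (fun ω => ω.2 i), marg_eq_law μ (fun ω => S.restrict ω.2)] <;>
  simp [Prod.ext_iff, funext_iff, Finset.restrict]

lemma sum_mul_apply_eq_sum_marg (i : Fin (n+1)) (G : A → B → ℝ) :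
    ∑ a, ∑ b, μ a b * G (a i) (b i)
      = ∑ x, ∑ y, marg μ {i} {i} (fun _ => x) (fun _ => y) * G x y := by
  have h := sum_mul_comp_eq_sum_law (uncurry μ) (fun ω => (ω.1 i, ω.2 i)) (uncurry G)
  simp only [Fintype.sum_prod_type, uncurry_apply_pair] at h
  rw [h]
  refine sum_congr rfl fun x _ => sum_congr rfl fun y _ => ?_
  rw [marg_eq_law μ (fun ω => (ω.1 i, ω.2 i)) fun a' b' => by simp]

lemma cmi_singleton_congr (i : Fin (n+1)) (h : ∀ a b, marg μ {i} {i} a b = marg ν {i} {i} a b) :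
    cmi μ {i} i ∅ = cmi ν {i} i ∅ := by
  let G (ρ : (Fin (n+1) → A) → (Fin (n+1) → B) → ℝ) (x : A) (y : B) : ℝ :=
    log (marg ρ {i} {i} (fun _ => x) (fun _ => y) * marg ρ ∅ ∅ (fun _ => x) (fun _ => y) /
      (marg ρ {i} ∅ (fun _ => x) (fun _ => y) * marg ρ ∅ {i} (fun _ => x) (fun _ => y)))
  have hcmi : ∀ ρ, cmi ρ {i} i ∅ = ∑ a, ∑ b, ρ a b * G ρ (a i) (b i) := fun ρ => by
    unfold cmi
    refine sum_congr rfl fun a _ => sum_congr rfl fun b _ => ?_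
    simp only [G, insert_empty_eq]
    congr 3 <;> (try congr 1) <;> exact marg_congr ρ (by simp) (by simp)
  have hG : G μ = G ν := by
    simp only [G, marg_congr_of_subset μ ν h (subset_refl _) (subset_refl _),
      marg_congr_of_subset μ ν h (empty_subset _) (empty_subset _),
      marg_congr_of_subset μ ν h (subset_refl _) (empty_subset _),
      marg_congr_of_subset μ ν h (empty_subset _) (subset_refl _)]
  rw [hcmi, hcmi, sum_mul_apply_eq_sum_marg, sum_mul_apply_eq_sum_marg, hG]
  simp only [h]

lemma marg_pi (f : Fin (n+1) → A → B → ℝ) (SA SB : Finset (Fin (n+1)))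
    (a : Fin (n+1) → A) (b : Fin (n+1) → B) :
    marg (fun a' b' => ∏ j, f j (a' j) (b' j)) SA SB a b
      = ∏ j, ∑ x ∈ (if j ∈ SA then {a j} else univ),
          ∑ y ∈ (if j ∈ SB then {b j} else univ), f j x y := by
  simp only [marg, ite_and, sum_ite_irrel, sum_const_zero, ← sum_filter,
    filter_agree_eq_piFinset, prod_univ_sum]

lemma marg_pi_empty_left {f : Fin (n+1) → A → B → ℝ} (hf : ∀ j, ∑ x, ∑ y, f j x y = 1)
    (S : Finset (Fin (n+1))) (a : Fin (n+1) → A) (b : Fin (n+1) → B) :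
    marg (fun a' b' => ∏ j, f j (a' j) (b' j)) ∅ S a b = ∏ j ∈ S, ∑ x, f j x (b j) := by
  simp only [marg_pi, notMem_empty, if_false, sum_ite_index, sum_singleton, sum_ite_irrel, hf]
  exact Fintype.prod_ite_mem _ _

lemma marg_pi_singleton {f : Fin (n+1) → A → B → ℝ} (hf : ∀ j, ∑ x, ∑ y, f j x y = 1)
    (i : Fin (n+1)) (a : Fin (n+1) → A) (b : Fin (n+1) → B) :
    marg (fun a' b' => ∏ j, f j (a' j) (b' j)) {i} {i} a b = f i (a i) (b i) := by
  simp only [marg_pi, mem_singleton, sum_ite_index, sum_singleton, sum_ite_irrel, hf]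
  rw [Fintype.prod_eq_single i fun j hj => by simp [hj]]
  simp

end Marginals

/-- Unlike `idxLt`, the bound `k` may be `n + 1`. -/
def idxBelow (n k : ℕ) : Finset (Fin (n+1)) :=
  univ.filter fun j => (j : ℕ) < k

lemma mem_idxBelow {k : ℕ} {j : Fin (n+1)} : j ∈ idxBelow n k ↔ (j : ℕ) < k := by
  simp [idxBelow]

lemma idxBelow_succ {k : ℕ} (hk : k < n + 1) :
    idxBelow n (k+1) = insert ⟨k, hk⟩ (idxBelow n k) := by
  ext j
  simp only [mem_idxBelow, mem_insert, Fin.ext_iff]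
  omega

lemma self_notMem_idxBelow {k : ℕ} (hk : k < n + 1) :
    (⟨k, hk⟩ : Fin (n+1)) ∉ idxBelow n k := by
  simp [mem_idxBelow]

lemma idxLe_eq_idxBelow (i : Fin (n+1)) : idxLe n i = idxBelow n (i + 1) := by
  ext j
  simp only [idxLe, idxBelow, mem_filter, mem_univ, true_and]
  omega

lemma idxLt_eq_idxBelow (i : Fin (n+1)) : idxLt n i = idxBelow n i := rfl

lemma insert_idxLt (i : Fin (n+1)) : insert i (idxLt n i) = idxLe n i := by
  rw [idxLt_eq_idxBelow, idxLe_eq_idxBelow, idxBelow_succ i.isLt]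

lemma self_notMem_idxLt (i : Fin (n+1)) : i ∉ idxLt n i :=
  self_notMem_idxBelow i.isLt

/-- `Q_i(b_i | b^{i-1}, a^i) = Q_i(b_i | a_i)`. -/
def IsMemorylessChannel (Q : Fin (n+1) → (Fin (n+1) → A) → (Fin (n+1) → B) → ℝ) :
    Prop :=
  ∀ (i : Fin (n+1)) (a a' : Fin (n+1) → A) (b b' : Fin (n+1) → B),
    a i = a' i → b i = b' i → Q i a b = Q i a' b'

/-- `P_i(a_i | a^{i-1}, b^{i-1}) = π_i(a_i)`. -/
def IsMemorylessInput (P : Fin (n+1) → (Fin (n+1) → A) → (Fin (n+1) → B) → ℝ) : Prop :=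
  ∀ (i : Fin (n+1)) (a a' : Fin (n+1) → A) (b b' : Fin (n+1) → B),
    a i = a' i → P i a b = P i a' b'

/-- The single-letter pmf `Q_j(y | x) π_j(x)`. -/
def letterPmf (Q P : Fin (n+1) → (Fin (n+1) → A) → (Fin (n+1) → B) → ℝ) (j : Fin (n+1))
    (x : A) (y : B) : ℝ :=
  Q j (fun _ => x) (fun _ => y) * P j (fun _ => x) (fun _ => y)

/-- The memoryless input `π_i(a_i) = P(A_i = a_i)` with the same input marginals as `μ`. -/
noncomputable def marginalInput (μ : (Fin (n+1) → A) → (Fin (n+1) → B) → ℝ) :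
    Fin (n+1) → (Fin (n+1) → A) → (Fin (n+1) → B) → ℝ :=
  fun i a b => marg μ {i} ∅ a b

lemma update_apply_of_lt {X : Type} {j k : Fin (n+1)} (h : (j : ℕ) < k) (a : Fin (n+1) → X)
    (x : X) : update a k x j = a j :=
  update_of_ne (Fin.ne_of_lt h) x a

section Kernels

omit [DecidableEq A] [DecidableEq B]

variable {Q P : Fin (n+1) → (Fin (n+1) → A) → (Fin (n+1) → B) → ℝ}

omit [Fintype A] in
lemma IsChannel.apply_update_fst (hQ : IsChannel Q) {j k : Fin (n+1)} (h : (j : ℕ) < k)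
    (a : Fin (n+1) → A) (b : Fin (n+1) → B) (x : A) : Q j (update a k x) b = Q j a b :=
  hQ.2.2 j _ _ _ _ (fun _ hl => update_apply_of_lt (by omega) a x) fun _ _ => rfl

omit [Fintype A] in
lemma IsChannel.apply_update_snd (hQ : IsChannel Q) {j k : Fin (n+1)} (h : (j : ℕ) < k)
    (a : Fin (n+1) → A) (b : Fin (n+1) → B) (y : B) : Q j a (update b k y) = Q j a b :=
  hQ.2.2 j _ _ _ _ (fun _ _ => rfl) fun _ hl => update_apply_of_lt (by omega) b y

omit [Fintype B] in
lemma IsInput.apply_update_fst (hP : IsInput P) {j k : Fin (n+1)} (h : (j : ℕ) < k)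
    (a : Fin (n+1) → A) (b : Fin (n+1) → B) (x : A) : P j (update a k x) b = P j a b :=
  hP.2.2 j _ _ _ _ (fun _ hl => update_apply_of_lt (by omega) a x) fun _ _ => rfl

omit [Fintype B] in
lemma IsInput.apply_update_snd (hP : IsInput P) {j k : Fin (n+1)} (h : (j : ℕ) ≤ k)
    (a : Fin (n+1) → A) (b : Fin (n+1) → B) (y : B) : P j a (update b k y) = P j a b :=
  hP.2.2 j _ _ _ _ (fun _ _ => rfl) fun _ hl => update_apply_of_lt (by omega) b y

lemma joint_nonneg (hQ : IsChannel Q) (hP : IsInput P) (a : Fin (n+1) → A)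
    (b : Fin (n+1) → B) : 0 ≤ joint Q P a b :=
  prod_nonneg fun i _ => mul_nonneg (hQ.1 i a b) (hP.1 i a b)

omit [Fintype A] [Fintype B] in
lemma channel_ne_zero_of_joint_ne_zero {i : Fin (n+1)} {a : Fin (n+1) → A}
    {b : Fin (n+1) → B} (h : joint Q P a b ≠ 0) : Q i a b ≠ 0 :=
  left_ne_zero_of_mul (prod_ne_zero_iff.1 h i (mem_univ i))

omit [Fintype A] [Fintype B] in
lemma joint_eq_prod_letterPmf (hQm : IsMemorylessChannel Q) (hPm : IsMemorylessInput P) :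
    joint Q P = fun a b => ∏ j, letterPmf Q P j (a j) (b j) :=
  funext₂ fun _ _ => prod_congr rfl fun j _ =>
    congr_arg₂ (· * ·) (hQm j _ _ _ _ rfl rfl) (hPm j _ _ _ _ rfl)

lemma sum_letterPmf (hQ : IsChannel Q) (hP : IsInput P) (hQm : IsMemorylessChannel Q)
    (hPm : IsMemorylessInput P) (a : Fin (n+1) → A) (b : Fin (n+1) → B) (j : Fin (n+1)) :
    ∑ x, ∑ y, letterPmf Q P j x y = 1 := by
  have hletter : ∀ x y, letterPmf Q P j x y
      = P j (update a j x) b * Q j (update a j x) (update b j y) := fun x y => by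
    rw [letterPmf, mul_comm, hQm j _ (update a j x) _ (update b j y) (by simp) (by simp),
      hPm j _ (update a j x) _ b (by simp)]
  simp only [hletter, ← mul_sum, hQ.2.1, mul_one, hP.2.1]

end Kernels

section Joint

variable {Q P : Fin (n+1) → (Fin (n+1) → A) → (Fin (n+1) → B) → ℝ}

lemma marg_joint_idxBelow_succ (hQ : IsChannel Q) (hP : IsInput P) {k : ℕ} (hk : k < n + 1)
    (h : ∀ a b, marg (joint Q P) (idxBelow n (k+1)) (idxBelow n (k+1)) a b
      = ∏ j ∈ idxBelow n (k+1), Q j a b * P j a b) (a : Fin (n+1) → A) (b : Fin (n+1) → B) :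
    marg (joint Q P) (idxBelow n (k+1)) (idxBelow n k) a b
      = P ⟨k, hk⟩ a b * ∏ j ∈ idxBelow n k, Q j a b * P j a b := by
  have hrest : ∀ y,
      ∏ j ∈ idxBelow n k, Q j a (update b ⟨k, hk⟩ y) * P j a (update b ⟨k, hk⟩ y)
      = ∏ j ∈ idxBelow n k, Q j a b * P j a b := fun y =>
    prod_congr rfl fun j hj => by
      rw [hQ.apply_update_snd (mem_idxBelow.1 hj), hP.apply_update_snd (mem_idxBelow.1 hj).le]
  rw [marg_split_snd _ (self_notMem_idxBelow hk), ← idxBelow_succ hk]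
  simp only [h]
  simp only [idxBelow_succ hk, prod_insert (self_notMem_idxBelow hk), hrest,
    hP.apply_update_snd (k := ⟨k, hk⟩) le_rfl]
  rw [← sum_mul, ← sum_mul, hQ.2.1, one_mul]

/-- Chain rule: the kernels after time `k` sum out of the law of `(A^k, B^k)`. -/
lemma marg_joint_idxBelow (hQ : IsChannel Q) (hP : IsInput P) {k : ℕ} (hk : k ≤ n + 1)
    (a : Fin (n+1) → A) (b : Fin (n+1) → B) :
    marg (joint Q P) (idxBelow n k) (idxBelow n k) a b
      = ∏ j ∈ idxBelow n k, Q j a b * P j a b := by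
  induction hk using Nat.decreasingInduction generalizing a b with
  | self =>
    have huniv : idxBelow n (n+1) = univ := by ext j; simp [mem_idxBelow, j.isLt]
    rw [huniv, marg_univ_univ]
    rfl
  | of_succ k hk ih =>
    have hrest : ∀ x,
        ∏ j ∈ idxBelow n k, Q j (update a ⟨k, hk⟩ x) b * P j (update a ⟨k, hk⟩ x) b
        = ∏ j ∈ idxBelow n k, Q j a b * P j a b := fun x =>
      prod_congr rfl fun j hj => by
        rw [hQ.apply_update_fst (mem_idxBelow.1 hj), hP.apply_update_fst (mem_idxBelow.1 hj)]
    rw [marg_split_fst _ (self_notMem_idxBelow hk), ← idxBelow_succ hk]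
    simp only [marg_joint_idxBelow_succ hQ hP hk ih, hrest]
    rw [← sum_mul, hP.2.1, one_mul]

lemma marg_joint_empty (hQ : IsChannel Q) (hP : IsInput P) (a : Fin (n+1) → A)
    (b : Fin (n+1) → B) : marg (joint Q P) ∅ ∅ a b = 1 := by
  have h0 : idxBelow n 0 = ∅ := by ext j; simp [mem_idxBelow]
  simpa [h0] using marg_joint_idxBelow hQ hP (Nat.zero_le _) a b

lemma sum_joint_le_one (hQ : IsChannel Q) (hP : IsInput P) :
    ∑ a, ∑ b, joint Q P a b ≤ 1 := by
  rcases isEmpty_or_nonempty (Fin (n+1) → A) with hA | hA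
  · simp
  rcases isEmpty_or_nonempty (Fin (n+1) → B) with hB | hB
  · simp
  obtain ⟨a⟩ := hA
  obtain ⟨b⟩ := hB
  rw [← marg_joint_empty hQ hP a b]
  simp [marg]

lemma marg_joint_idxLe (hQ : IsChannel Q) (hP : IsInput P) (i : Fin (n+1))
    (a : Fin (n+1) → A) (b : Fin (n+1) → B) :
    marg (joint Q P) (idxLe n i) (idxLe n i) a b
      = Q i a b * marg (joint Q P) (idxLe n i) (idxLt n i) a b := by
  have h := marg_joint_idxBelow hQ hP (k := i + 1) (by omega)
  rw [idxLe_eq_idxBelow, idxLt_eq_idxBelow, marg_joint_idxBelow_succ hQ hP i.isLt h, h,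
    idxBelow_succ i.isLt, prod_insert (self_notMem_idxBelow i.isLt)]
  ring

lemma marg_joint_singleton (hQ : IsChannel Q) (hP : IsInput P) (hQm : IsMemorylessChannel Q)
    (i : Fin (n+1)) (a : Fin (n+1) → A) (b : Fin (n+1) → B) :
    marg (joint Q P) {i} {i} a b = Q i a b * marg (joint Q P) {i} ∅ a b := by
  have hsub : {i} ⊆ idxLe n i := by simp [idxLe]
  have hdiff : idxLe n i \ {i} = idxLt n i := by
    rw [← insert_idxLt, sdiff_singleton_eq_erase, erase_insert (self_notMem_idxLt i)]
  rw [marg_eq_sum_marg _ hsub hsub, marg_eq_sum_marg _ hsub (empty_subset (idxLt n i)), hdiff,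
    sdiff_empty, mul_sum]
  refine sum_congr rfl fun a'' ha'' => ?_
  rw [mul_sum]
  refine sum_congr rfl fun b'' hb'' => ?_
  rw [marg_joint_idxLe hQ hP, hQm i a'' a b'' b ((mem_filter.1 ha'').2 i
    (self_notMem_idxLt i)) ((mem_filter.1 hb'').2 i (self_notMem_idxLt i))]

/-- `I(A_i; B_i) - I(A^i; B_i | B^{i-1}) = I(B_i; B^{i-1})`. -/
lemma cmi_singleton_sub_cmi_idxLe (hQ : IsChannel Q) (hP : IsInput P)
    (hQm : IsMemorylessChannel Q) (i : Fin (n+1)) :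
    cmi (joint Q P) {i} i ∅ - cmi (joint Q P) (idxLe n i) i (idxLt n i)
      = ∑ a, ∑ b, joint Q P a b * log (marg (joint Q P) ∅ (idxLe n i) a b /
          (marg (joint Q P) ∅ {i} a b * marg (joint Q P) ∅ (idxLt n i) a b)) := by
  unfold cmi
  rw [insert_idxLt, insert_empty_eq, ← sum_sub_distrib]
  refine sum_congr rfl fun a _ => ?_
  rw [← sum_sub_distrib]
  refine sum_congr rfl fun b _ => ?_
  rcases eq_or_ne (joint Q P a b) 0 with h | h
  · simp [h]
  have hμ := joint_nonneg hQ hP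
  have hpos : ∀ SA SB, marg (joint Q P) SA SB a b ≠ 0 := fun SA SB =>
    ((lt_of_le_of_ne (hμ a b) h.symm).trans_le (le_marg hμ SA SB a b)).ne'
  have hQi : Q i a b ≠ 0 := channel_ne_zero_of_joint_ne_zero h
  rw [← mul_sub, ← log_div (by simp [hpos, hQi, marg_joint_empty hQ hP,
      marg_joint_singleton hQ hP hQm]) (by simp [hpos])]
  congr 2
  rw [marg_joint_singleton hQ hP hQm, marg_joint_empty hQ hP, marg_joint_idxLe hQ hP]
  field_simp [hpos, hQi]

lemma cmi_idxLe_le_cmi_singleton (hQ : IsChannel Q) (hP : IsInput P)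
    (hQm : IsMemorylessChannel Q) (i : Fin (n+1)) :
    cmi (joint Q P) (idxLe n i) i (idxLt n i) ≤ cmi (joint Q P) {i} i ∅ := by
  rw [← sub_nonneg, cmi_singleton_sub_cmi_idxLe hQ hP hQm, ← insert_idxLt]
  exact sum_mul_log_marg_nonneg (joint_nonneg hQ hP) (sum_joint_le_one hQ hP) i _

lemma marg_joint_idxLe_of_memoryless (hQ : IsChannel Q) (hP : IsInput P)
    (hQm : IsMemorylessChannel Q) (hPm : IsMemorylessInput P) (i : Fin (n+1))
    (a : Fin (n+1) → A) (b : Fin (n+1) → B) :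
    marg (joint Q P) ∅ (idxLe n i) a b
      = marg (joint Q P) ∅ {i} a b * marg (joint Q P) ∅ (idxLt n i) a b := by
  have hf := sum_letterPmf hQ hP hQm hPm a b
  rw [joint_eq_prod_letterPmf hQm hPm, marg_pi_empty_left hf, marg_pi_empty_left hf,
    marg_pi_empty_left hf, ← insert_idxLt, prod_insert (self_notMem_idxLt i), prod_singleton]

lemma cmi_idxLe_eq_cmi_singleton_of_memoryless (hQ : IsChannel Q) (hP : IsInput P)
    (hQm : IsMemorylessChannel Q) (hPm : IsMemorylessInput P) (i : Fin (n+1)) :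
    cmi (joint Q P) (idxLe n i) i (idxLt n i) = cmi (joint Q P) {i} i ∅ := by
  rw [← sub_eq_zero, ← neg_eq_zero, neg_sub, cmi_singleton_sub_cmi_idxLe hQ hP hQm]
  refine sum_eq_zero fun a _ => sum_eq_zero fun b _ => ?_
  rw [marg_joint_idxLe_of_memoryless hQ hP hQm hPm]
  rcases eq_or_ne (marg (joint Q P) ∅ {i} a b * marg (joint Q P) ∅ (idxLt n i) a b) 0 with h | h
  · simp [h]
  · simp [div_self h]

lemma isInput_marginalInput (hQ : IsChannel Q) (hP : IsInput P) :
    IsInput (marginalInput (joint Q P)) := by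
  refine ⟨fun i a b => marg_nonneg (joint_nonneg hQ hP) _ _ _ _, fun i a b => ?_,
    fun i a a' b b' ha _ => marg_congr _ (by simpa using ha i le_rfl) (by simp)⟩
  simp only [marginalInput, ← insert_empty_eq, ← marg_split_fst _ (notMem_empty i),
    marg_joint_empty hQ hP]

lemma marginalInput_isMemoryless (μ : (Fin (n+1) → A) → (Fin (n+1) → B) → ℝ) :
    IsMemorylessInput (marginalInput μ) :=
  fun _ _ _ _ _ h => marg_congr μ (by simpa using h) (by simp)

lemma cmi_singleton_marginalInput (hQ : IsChannel Q) (hP : IsInput P)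
    (hQm : IsMemorylessChannel Q) (i : Fin (n+1)) :
    cmi (joint Q (marginalInput (joint Q P))) {i} i ∅ = cmi (joint Q P) {i} i ∅ := by
  refine cmi_singleton_congr _ _ i fun a b => ?_
  have hPm := marginalInput_isMemoryless (joint Q P)
  rw [joint_eq_prod_letterPmf hQm hPm,
    marg_pi_singleton (sum_letterPmf hQ (isInput_marginalInput hQ hP) hQm hPm a b),
    marg_joint_singleton hQ hP hQm, letterPmf, marginalInput,
    hQm i (fun _ => a i) a (fun _ => b i) b rfl rfl, marg_congr _ (a' := a) (b' := b)
    (by simp) (by simp)]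

lemma DI_le_DI_marginalInput (hQ : IsChannel Q) (hP : IsInput P)
    (hQm : IsMemorylessChannel Q) :
    DI (joint Q P) ≤ DI (joint Q (marginalInput (joint Q P))) := by
  have hP' := isInput_marginalInput hQ hP
  have hPm' := marginalInput_isMemoryless (joint Q P)
  calc DI (joint Q P) ≤ ∑ i, cmi (joint Q P) {i} i ∅ :=
        sum_le_sum fun i _ => cmi_idxLe_le_cmi_singleton hQ hP hQm i
    _ = DI (joint Q (marginalInput (joint Q P))) := by
        simp only [DI, cmi_idxLe_eq_cmi_singleton_of_memoryless hQ hP' hQm hPm',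
          cmi_singleton_marginalInput hQ hP hQm]

end Joint

/-- for a memoryless channel `Q_i(b_i | a_i)`, the supremum of directed
information over all feedback input kernels equals the supremum over memoryless input
distributions `π_i(a_i)`, and for such inputs directed information equals
`∑_i I(A_i; B_i)` (feedback does not increase the finite-horizon capacity). -/
theorem stmt6 (Q : Fin (n+1) → (Fin (n+1) → A) → (Fin (n+1) → B) → ℝ)
    (hQ : IsChannel Q)
    (hQmemless : ∀ (i : Fin (n+1)) (a a' : Fin (n+1) → A) (b b' : Fin (n+1) → B),
      a i = a' i → b i = b' i → Q i a b = Q i a' b') :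
    sSup {x : ℝ | ∃ P : Fin (n+1) → (Fin (n+1) → A) → (Fin (n+1) → B) → ℝ,
        IsInput P ∧ x = DI (joint Q P)}
      = sSup {x : ℝ | ∃ P : Fin (n+1) → (Fin (n+1) → A) → (Fin (n+1) → B) → ℝ,
          IsInput P ∧
          (∀ (i : Fin (n+1)) (a a' : Fin (n+1) → A) (b b' : Fin (n+1) → B),
            a i = a' i → P i a b = P i a' b') ∧
          x = DI (joint Q P)}
    ∧ ∀ P : Fin (n+1) → (Fin (n+1) → A) → (Fin (n+1) → B) → ℝ,
        IsInput P →
        (∀ (i : Fin (n+1)) (a a' : Fin (n+1) → A) (b b' : Fin (n+1) → B),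
          a i = a' i → P i a b = P i a' b') →
        DI (joint Q P) = ∑ i : Fin (n+1), cmi (joint Q P) {i} i ∅ := by
  refine ⟨csSup_eq_csSup_of_forall_exists_le ?_ ?_, fun P hP hPm =>
    sum_congr rfl fun i _ => cmi_idxLe_eq_cmi_singleton_of_memoryless hQ hP hQmemless hPm i⟩
  · rintro _ ⟨P, hP, rfl⟩
    exact ⟨_, ⟨_, isInput_marginalInput hQ hP, marginalInput_isMemoryless _, rfl⟩,
      DI_le_DI_marginalInput hQ hP hQmemless⟩
  · rintro _ ⟨P, hP, -, rfl⟩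
    exact ⟨_, ⟨P, hP, rfl⟩, le_rfl⟩
end

section
/- Let C ∈ ℝ, s > 0, Q ≥ 0, R > 0, and define F = sqrt( (R(C−1)² + Q)(R(C+1)² + Q) ) and P = s(Q − R + C²R + F)/2. Then P ≥ 0 and P satisfies the scalar algebraic Riccati equation P = C²P + sQ − C²P²/(P + sR). -/
/-- the scalar algebraic Riccati equation for the Gaussian linear channel:
with `F = √((R(C−1)² + Q)(R(C+1)² + Q))` and `P = s(Q − R + C²R + F)/2`, one has
`P ≥ 0` and `P = C²P + sQ − C²P²/(P + sR)`. -/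
theorem stmt8 (C s Q R : ℝ) (hs : 0 < s) (hQ : 0 ≤ Q) (hR : 0 < R)
    (F : ℝ) (hF : F = Real.sqrt ((R * (C - 1)^2 + Q) * (R * (C + 1)^2 + Q)))
    (P : ℝ) (hP : P = s * (Q - R + C^2 * R + F) / 2) :
    0 ≤ P ∧ P = C^2 * P + s * Q - C^2 * P^2 / (P + s * R) := by
  have h1 : 0 ≤ (R * (C - 1)^2 + Q) * (R * (C + 1)^2 + Q) := by positivity
  have hF0 : 0 ≤ F := hF ▸ Real.sqrt_nonneg _
  have hF2 : F^2 = (R * (C - 1)^2 + Q) * (R * (C + 1)^2 + Q) := by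
    rw [hF, sq, Real.mul_self_sqrt h1]
  have hFge : Q - R + C^2 * R + F ≥ 0 := by
    nlinarith [sq_nonneg (F + (Q - R + C^2 * R)), sq_nonneg (F - (Q - R + C^2 * R)),
      mul_nonneg hR.le hQ]
  have hP0 : 0 ≤ P := by rw [hP]; positivity
  refine ⟨hP0, ?_⟩
  have hden : P + s * R > 0 := by nlinarith
  field_simp
  subst hP
  linear_combination (s^2/4) * hF2
end

section
/- Let C ∈ ℝ, s > 0, Q ≥ 0, R > 0, F = sqrt((R(C−1)²+Q)(R(C+1)²+Q)), P = s(Q − R + C²R + F)/2, and Γ* = −C P/(P + sR). Then Γ* = −C(Q − R + C²R + F)/(Q + R + C²R + F), and the closed-loop coefficient satisfies |C + Γ*| < 1 provided Q > 0 or (Q = 0 and C ≠ ±1). -/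
/-- the optimal feedback gain `Γ* = −CP/(P + sR)` equals
`−C(Q − R + C²R + F)/(Q + R + C²R + F)`, and the closed-loop coefficient satisfies
`|C + Γ*| < 1` provided `Q > 0`, or `Q = 0` and `C ≠ ±1`. -/
theorem stmt9 (C s Q R : ℝ) (hs : 0 < s) (hQ : 0 ≤ Q) (hR : 0 < R)
    (F : ℝ) (hF : F = Real.sqrt ((R * (C - 1)^2 + Q) * (R * (C + 1)^2 + Q)))
    (P : ℝ) (hP : P = s * (Q - R + C^2 * R + F) / 2)
    (Γ : ℝ) (hΓ : Γ = -(C * P) / (P + s * R)) :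
    Γ = -(C * (Q - R + C^2 * R + F)) / (Q + R + C^2 * R + F)
    ∧ ((0 < Q ∨ (Q = 0 ∧ C ≠ 1 ∧ C ≠ -1)) → |C + Γ| < 1) := by
  have hF0 : 0 ≤ F := hF ▸ Real.sqrt_nonneg _
  have hB : 0 < Q + R + C ^ 2 * R + F := by nlinarith [sq_nonneg C]
  have hΓ' : Γ = -(C * (Q - R + C ^ 2 * R + F)) / (Q + R + C ^ 2 * R + F) := by
    rw [hΓ, hP]
    rw [show s * (Q - R + C ^ 2 * R + F) / 2 + s * R
        = (s / 2) * (Q + R + C ^ 2 * R + F) by ring,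
      show -(C * (s * (Q - R + C ^ 2 * R + F) / 2))
        = (s / 2) * (-(C * (Q - R + C ^ 2 * R + F))) by ring,
      mul_div_mul_left _ _ (by positivity : s / 2 ≠ 0)]
  refine ⟨hΓ', fun h => ?_⟩
  have key : 2 * |C| * R < Q + R + C ^ 2 * R + F := by
    rcases h with hQpos | ⟨hQ0, hC1, hC1'⟩
    · nlinarith [sq_nonneg (|C| - 1), sq_abs C]
    · have hFpos : 0 < F := by
        rw [hF, hQ0]
        apply Real.sqrt_pos.mpr
        have hc1 : (C - 1) ≠ 0 := sub_ne_zero.mpr hC1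
        have hc2 : (C + 1) ≠ 0 := by
          intro hc; exact hC1' (by linarith)
        have h1 : 0 < R * (C - 1) ^ 2 := mul_pos hR (by positivity)
        have h2 : 0 < R * (C + 1) ^ 2 := mul_pos hR (by positivity)
        nlinarith
      nlinarith [sq_nonneg (|C| - 1), sq_abs C, hQ0.ge]
  have : C + Γ = 2 * C * R / (Q + R + C ^ 2 * R + F) := by
    rw [hΓ']
    field_simp
    ring
  rw [this, abs_div, abs_of_pos hB, div_lt_one hB]
  calc |2 * C * R| = 2 * |C| * R := by
        rw [abs_mul, abs_mul, abs_of_pos hR, abs_of_pos (by norm_num : (0:ℝ) < 2)]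
      _ < _ := key
end

section
/- Feedback capacity formula evaluation: with K_V > 0, C ∈ ℝ, Q ≥ 0, R > 0, F = sqrt((R(C−1)²+Q)(R(C+1)²+Q)), s = 1/(2(κ + K_V R)), P = s(Q − R + C²R + F)/2, and K_Z = 2(κ + K_V R)/(Q + R + C²R + F) − K_V ≥ 0 (so κ ≥ κ_min = K_V(Q−R+C²R+F)/2), the expression J = (1/2) log((K_Z + K_V)/K_V) + sκ − sRK_Z − P(K_Z + K_V) equals (1/2) log( 2(κ + K_V R)/( K_V (Q + R + C²R + F) ) ). -/
/-- closed-form evaluation of the dynamic-programming optimal value: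
with `s = 1/(2(κ + K_V R))`, `P = s(Q − R + C²R + F)/2`,
`K_Z = 2(κ + K_V R)/(Q + R + C²R + F) − K_V ≥ 0`, the value
`J = ½ log((K_Z + K_V)/K_V) + sκ − sRK_Z − P(K_Z + K_V)` equals
`½ log( 2(κ + K_V R)/(K_V(Q + R + C²R + F)) )`. -/
theorem stmt13 (K_V C Q R κ : ℝ) (hK : 0 < K_V) (hQ : 0 ≤ Q) (hR : 0 < R) (hκ : 0 ≤ κ)
    (F : ℝ) (hF : F = Real.sqrt ((R * (C - 1)^2 + Q) * (R * (C + 1)^2 + Q)))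
    (s : ℝ) (hs : s = 1 / (2 * (κ + K_V * R)))
    (P : ℝ) (hP : P = s * (Q - R + C^2 * R + F) / 2)
    (KZ : ℝ) (hKZ : KZ = 2 * (κ + K_V * R) / (Q + R + C^2 * R + F) - K_V)
    (hKZpos : 0 ≤ KZ) :
    (1/2) * Real.log ((KZ + K_V) / K_V) + s * κ - s * R * KZ - P * (KZ + K_V)
      = (1/2) * Real.log (2 * (κ + K_V * R) / (K_V * (Q + R + C^2 * R + F))) := by
  have hF0 : 0 ≤ F := hF ▸ Real.sqrt_nonneg _
  have hT : 0 < Q + R + C^2 * R + F := by nlinarith [sq_nonneg C]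
  have hM : 0 < 2 * (κ + K_V * R) := by nlinarith
  have hlog : (KZ + K_V) / K_V = 2 * (κ + K_V * R) / (K_V * (Q + R + C^2 * R + F)) := by
    rw [hKZ]; field_simp; ring
  have hzero : s * κ - s * R * KZ - P * (KZ + K_V) = 0 := by
    rw [hP, hs, hKZ]; field_simp; ring
  rw [hlog] at *
  linarith
end

section
/- For the specialization Q = R = 1: F = sqrt(C⁴ + 4), κ_min = K_V( sqrt(C⁴+4) + C² )/2, and the feedback capacity for κ ≥ κ_min equals (1/2) log( 2(κ + K_V)/( K_V( sqrt(C⁴+4) + C² + 2 ) ) ); in particular at κ = κ_min this expression equals 0, and it is strictly increasing in κ on [κ_min, ∞). -/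
/-- the `Q = R = 1` specialization: `F = √(C⁴ + 4)`,
`κ_min = K_V(√(C⁴+4) + C²)/2`, the capacity
`κ ↦ ½ log( 2(κ + K_V)/(K_V(√(C⁴+4) + C² + 2)) )` vanishes at `κ_min` and is
strictly increasing on `[κ_min, ∞)`. -/
theorem stmt14 (K_V C : ℝ) (hK : 0 < K_V)
    (κmin : ℝ) (hκmin : κmin = K_V * (Real.sqrt (C^4 + 4) + C^2) / 2)
    (cap : ℝ → ℝ)
    (hcap : ∀ κ, cap κ =
      (1/2) * Real.log (2 * (κ + K_V) / (K_V * (Real.sqrt (C^4 + 4) + C^2 + 2)))) :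
    Real.sqrt ((1 * (C - 1)^2 + 1) * (1 * (C + 1)^2 + 1)) = Real.sqrt (C^4 + 4)
    ∧ cap κmin = 0
    ∧ StrictMonoOn cap (Set.Ici κmin) := by
  set s := Real.sqrt (C^4 + 4) with hs
  have hs2 : 2 ≤ s := by
    rw [hs, show (2:ℝ) = Real.sqrt 4 by
      rw [show (4:ℝ) = 2^2 by norm_num, Real.sqrt_sq (by norm_num)]]
    exact Real.sqrt_le_sqrt (by nlinarith [sq_nonneg (C^2)])
  have hspos : 0 < s + C^2 + 2 := by positivity
  have hden : 0 < K_V * (s + C^2 + 2) := by positivity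
  have hκminpos : 0 < κmin := by
    rw [hκmin]
    have : 0 < s + C^2 := by positivity
    positivity
  refine ⟨?_, ?_, ?_⟩
  · congr 1; ring
  · rw [hcap]
    have harg : 2 * (κmin + K_V) / (K_V * (s + C^2 + 2)) = 1 := by
      rw [hκmin]; field_simp
    rw [harg, Real.log_one, mul_zero]
  · intro a ha b hb hab
    rw [hcap, hcap]
    have hapos : 0 < a + K_V := by
      have := Set.mem_Ici.mp ha; linarith
    have hbpos : 0 < b + K_V := by
      have := Set.mem_Ici.mp hb; linarith
    have h1 : 0 < 2 * (a + K_V) / (K_V * (s + C^2 + 2)) := by positivity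
    have h2 : 2 * (a + K_V) / (K_V * (s + C^2 + 2)) <
        2 * (b + K_V) / (K_V * (s + C^2 + 2)) := by
      gcongr
    exact mul_lt_mul_of_pos_left (Real.log_lt_log h1 h2) (by norm_num)
end
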